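/- arXiv:2503.17232 — 6 statements merged into one kernel-verified Lean document; each statement's English description precedes it below -/
import Mathlib

section
/- For all p ∈ ℕ, all β ≥ 0, all integers 1 ≤ s ≤ t, and every starting configuration X = (x^1,…,x^p) ∈ (ℤ²)^p, one has E^{⊗p}_X[ exp( Σ_{n=s}^t Σ_{x∈ℤ²} Λ_{N_n^p(x)}(β) ) ] ≤ E^{⊗p}_{(0,…,0)}[ exp( Σ_{n=s}^t Σ_{x∈ℤ²} Λ_{N_n^p(x)}(β) ) ]; in particular, for Gaussian weights, E^{⊗p}_X[ exp( β² Σ_{n=s}^t Σ_{1≤i<j≤p} 1{S_n^i = S_n^j} ) ] ≤ E^{⊗p}_{(0,…,0)}[ exp( β² Σ_{n=s}^t Σ_{1≤i<j≤p} 1{S_n^i = S_n^j} ) ]. -/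
open MeasureTheory ProbabilityTheory Filter Finset

noncomputable section

namespace DP

/-- The four nearest-neighbour steps of the simple random walk on `ℤ²`. -/
def steps : Finset (ℤ × ℤ) := {(1, 0), (-1, 0), (0, 1), (0, -1)}

/-- Position at time `n` of the nearest-neighbour path started at `x` whose first `t`
increments are given by `δ`. -/
def walkPath {t : ℕ} (x : ℤ × ℤ) (δ : Fin t → ℤ × ℤ) (n : ℕ) : ℤ × ℤ :=
  x + ∑ k ∈ Finset.univ.filter (fun k : Fin t => (k : ℕ) < n), δ k

/-- Expectation, with respect to `q` independent simple random walks on `ℤ²` run for `t`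
steps and started at `X`, of a functional `f` of the paths. -/
def Ewalk (q t : ℕ) (X : Fin q → ℤ × ℤ) (f : (Fin q → ℕ → ℤ × ℤ) → ℝ) : ℝ :=
  (∑ δ : Fin q → Fin t → steps,
      f fun i => walkPath (X i) fun k => ((δ i k : ℤ × ℤ))) / 4 ^ (q * t)

open Classical in
/-- Probability of an event for `q` independent simple random walks started at `X`. -/
def Pwalk (q t : ℕ) (X : Fin q → ℤ × ℤ) (A : (Fin q → ℕ → ℤ × ℤ) → Prop) : ℝ :=
  Ewalk q t X fun S => if A S then 1 else 0

/-- `p_n(x) = P_0(S_n = x)` for the simple random walk on `ℤ²`. -/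
def pSRW (n : ℕ) (x : ℤ × ℤ) : ℝ :=
  Pwalk 1 n (fun _ => 0) fun S => S 0 n = x

/-- `p_n^⋆ = sup_{x ∈ ℤ²} p_n(x)`. -/
def pstar (n : ℕ) : ℝ := ⨆ x : ℤ × ℤ, pSRW n x

/-- `R_N = Σ_{n=1}^N p_{2n}(0)`, the expected number of collisions of two walks. -/
def RN (N : ℕ) : ℝ := ∑ n ∈ Finset.Icc 1 N, pSRW (2 * n) 0

/-- `Λ(β) = log E_μ[exp(β ω)]`. -/
def cgf (μ : Measure ℝ) (β : ℝ) : ℝ := Real.log (∫ x, Real.exp (β * x) ∂μ)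

/-- `Λ_p(β) = Λ(pβ) - pΛ(β)` for `p ≥ 2`, and `Λ_0 = Λ_1 = 0`. -/
def cgfp (μ : Measure ℝ) (p : ℕ) (β : ℝ) : ℝ :=
  if 2 ≤ p then cgf μ ((p : ℝ) * β) - (p : ℝ) * cgf μ β else 0

/-- `σ² = exp(Λ₂(β)) - 1`. -/
def sigma2 (μ : Measure ℝ) (β : ℝ) : ℝ := Real.exp (cgfp μ 2 β) - 1

/-- `σ̄² = σ²/π`. -/
def sigmabar2 (μ : Measure ℝ) (β : ℝ) : ℝ := sigma2 μ β / Real.pi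

/-- Environment law: probability measure with mean `0`, variance `1` and finite
exponential moments. -/
structure EnvLaw (μ : Measure ℝ) : Prop where
  prob : IsProbabilityMeasure μ
  mean_zero : ∫ x, x ∂μ = 0
  variance_one : ∫ x, x ^ 2 ∂μ = 1
  exp_moments : ∀ β : ℝ, Integrable (fun x => Real.exp (β * x)) μ

/-- The field `ω(n,x)` is i.i.d. with common law `μ` under `P`. -/
structure IsIIDEnv {Ω : Type*} [MeasurableSpace Ω] (P : Measure Ω) (μ : Measure ℝ)
    (ω : ℕ → ℤ × ℤ → Ω → ℝ) : Prop where
  meas : ∀ n x, Measurable (ω n x)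
  indep : iIndepFun (fun p : ℕ × (ℤ × ℤ) => ω p.1 p.2) P
  law : ∀ n x, P.map (ω n x) = μ

/-- The partition function `W_{s,t}(x,β)`, as a function of the environment. -/
def W {Ω : Type*} (μ : Measure ℝ) (ω : ℕ → ℤ × ℤ → Ω → ℝ) (s t : ℕ) (x : ℤ × ℤ)
    (β : ℝ) (ωe : Ω) : ℝ :=
  Ewalk 1 t (fun _ => x) fun S =>
    Real.exp (∑ n ∈ Finset.Icc s t, (β * ω n (S 0 n) ωe - cgf μ β))

/-- Sub-critical regime: `β_N = β̂/√R_N` with `β̂ ∈ (0,1)` fixed. -/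
def SC (βN : ℕ → ℝ) (bhat : ℝ) : Prop :=
  0 < bhat ∧ bhat < 1 ∧ ∀ N, βN N = bhat / Real.sqrt (RN N)

/-- Quasi-critical regime: `σ_N² = (1/R_N)(1 - ϑ_N/log N)` with `1 ≪ ϑ_N ≪ log N`. -/
structure QC (μ : Measure ℝ) (βN : ℕ → ℝ) (ϑ : ℕ → ℝ) : Prop where
  sigma_eq : ∀ N, 2 ≤ N → sigma2 μ (βN N) = (1 / RN N) * (1 - ϑ N / Real.log N)
  theta_top : Tendsto ϑ atTop atTop
  theta_small : Tendsto (fun N => ϑ N / Real.log N) atTop (nhds 0)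

/-- `U_N(n)`. -/
def UN (μ : Measure ℝ) (β : ℝ) (n : ℕ) : ℝ :=
  if n = 0 then 1
  else
    sigma2 μ β * Ewalk 2 n (fun _ => 0) fun S =>
      Real.exp (cgfp μ 2 β *
          ∑ l ∈ Finset.Icc 1 (n - 1), (if S 0 l = S 1 l then (1 : ℝ) else 0)) *
        (if S 0 n = S 1 n then (1 : ℝ) else 0)

/-- `F(u) = 1/(u(1 - σ̄² log u))`. -/
def Ffun (σb2 : ℝ) (u : ℝ) : ℝ := 1 / (u * (1 - σb2 * Real.log u))

/-- `f(v) = σ̄⁻² log((1 - σ̄² log v)/(1 - σ̄² log t))`. -/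
def ffun (σb2 t : ℝ) (v : ℝ) : ℝ :=
  σb2⁻¹ * Real.log ((1 - σb2 * Real.log v) / (1 - σb2 * Real.log t))

/-- `b_t = (1 - σ̄² log t)⁻¹`. -/
def bfun (σb2 t : ℝ) : ℝ := (1 - σb2 * Real.log t)⁻¹

/-- The set of (ordered) pairs `C_q = {(i,j) : 1 ≤ i < j ≤ q}`. -/
def Cq (q : ℕ) : Finset (Fin q × Fin q) := Finset.univ.filter fun p => p.1 < p.2

/-- `ψ*_{s,t,q} = Σ_{n=s}^t Σ_{i<j} 1{S_n^i = S_n^j}`, the pairwise collision count. -/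
def pairSum (q : ℕ) (s t : ℕ) (S : Fin q → ℕ → ℤ × ℤ) : ℝ :=
  ∑ n ∈ Finset.Icc s t, ∑ i : Fin q, ∑ j : Fin q,
    if i < j ∧ S i n = S j n then (1 : ℝ) else 0

end DP

namespace DP

/-!
Realise the environment as the coordinates of the product measure `envLaw μ`. For fixed paths,
integrating out the environment turns `∏ᵢ exp (Σₙ (β ω(n, Sⁱₙ) - Λ(β)))` into
`exp (Σₙ Σₓ Λ_{Nₙ(x)}(β))`, because the walkers sitting at the same site contribute
`E[exp (k β ω)] = exp (Λ(kβ))`. Hence the left-hand side equals `E[∏ᵢ W(xⁱ)]`. By AM–GM,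
`∏ᵢ W(xⁱ) ≤ p⁻¹ Σⱼ W(xʲ)ᵖ`, and `E[W(x)ᵖ]` is the same quantity with all `p` walks started at `x`,
which by translation invariance does not depend on `x`. For standard Gaussian weights
`Λ_k(β) = β² k(k-1)/2`, and `Σₓ N(x)(N(x)-1)/2` counts the colliding pairs `i < j`.
-/

section InfinitePi

variable {ι : Type*} {X : ι → Type*} [∀ i, MeasurableSpace (X i)]
  (ν : ∀ i, Measure (X i)) [∀ i, IsProbabilityMeasure (ν i)]

theorem integrable_finset_prod_infinitePi (s : Finset ι) {f : ∀ i, X i → ℝ}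
    (hf : ∀ i, Integrable (f i) (ν i)) :
    Integrable (fun ω => ∏ i ∈ s, f i (ω i)) (Measure.infinitePi ν) := by
  have hrestrict : MeasurePreserving s.restrict (Measure.infinitePi ν)
      (Measure.pi fun i : s => ν i) :=
    ⟨Finset.measurable_restrict s, Measure.infinitePi_map_restrict ν⟩
  have := hrestrict.integrable_comp_of_integrable
    (Integrable.fintype_prod_dep (f := fun (i : s) => f i) fun i => hf i)
  simpa only [Function.comp_def, Finset.restrict, Finset.prod_coe_sort s fun i => f i _]
    using this

theorem integral_finset_prod_infinitePi (s : Finset ι) {f : ∀ i, X i → ℝ}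
    (hf : ∀ i, AEStronglyMeasurable (f i) (ν i)) :
    ∫ ω, ∏ i ∈ s, f i (ω i) ∂Measure.infinitePi ν = ∏ i ∈ s, ∫ x, f i x ∂ν i := by
  have := integral_restrict_infinitePi ν (s := s) (f := fun y => ∏ i : s, f i (y i)) ?_
  · simpa only [Finset.restrict, Finset.prod_coe_sort s fun i => f i _,
      integral_fintype_prod_eq_prod, Finset.prod_coe_sort s fun i => ∫ x, f i x ∂ν i] using this
  · exact Finset.aestronglyMeasurable_fun_prod Finset.univ fun i _ =>
      (hf i).comp_quasiMeasurePreserving (Measure.quasiMeasurePreserving_eval _ i)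

end InfinitePi

section Occupancy

variable {ι α : Type*} [Fintype ι] [DecidableEq α]

def occupancy (P : ι → α) (x : α) : ℕ := ∑ i, if P i = x then 1 else 0

theorem occupancy_eq_card (P : ι → α) (x : α) : occupancy P x = #{i | P i = x} :=
  (Finset.card_filter _ _).symm

theorem occupancy_eq_zero {P : ι → α} {x : α} (hx : x ∉ univ.image P) : occupancy P x = 0 :=
  Finset.sum_eq_zero fun i _ =>
    if_neg fun h : P i = x => hx (h ▸ Finset.mem_image_of_mem P (mem_univ i))

theorem one_le_occupancy {P : ι → α} {x : α} (hx : x ∈ univ.image P) : 1 ≤ occupancy P x := by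
  obtain ⟨i, -, rfl⟩ := Finset.mem_image.mp hx
  rw [occupancy_eq_card, Nat.one_le_iff_ne_zero, Ne, Finset.card_eq_zero,
    Finset.filter_eq_empty_iff]
  exact fun h => h (mem_univ i) rfl

theorem prod_comp_eq_prod_pow_occupancy {M : Type*} [CommMonoid M] (f : α → M) (P : ι → α) :
    ∏ i, f (P i) = ∏ x ∈ univ.image P, f x ^ occupancy P x := by
  simp only [occupancy_eq_card, Finset.prod_comp]

theorem sum_comp_eq_sum_occupancy_mul {R : Type*} [CommSemiring R] (f : α → R) (P : ι → α) :
    ∑ i, f (P i) = ∑ x ∈ univ.image P, (occupancy P x : R) * f x := by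
  simp only [occupancy_eq_card, Finset.sum_comp, nsmul_eq_mul]

theorem occupancy_add_left [AddGroup α] (a : α) (P : ι → α) (x : α) :
    occupancy (fun i => a + P i) (a + x) = occupancy P x := by
  simp only [occupancy, add_right_inj]

end Occupancy

section Cumulants

variable (μ : Measure ℝ)

theorem cgf_eq_cgf_id : cgf μ = ProbabilityTheory.cgf id μ := rfl

@[simp]
theorem cgfp_zero (β : ℝ) : cgfp μ 0 β = 0 := by simp [cgfp]

theorem tsum_cgfp_occupancy {ι α : Type*} [Fintype ι] [DecidableEq α] (P : ι → α) (β : ℝ) :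
    ∑' x, cgfp μ (occupancy P x) β = ∑ x ∈ univ.image P, cgfp μ (occupancy P x) β :=
  tsum_eq_sum fun x hx => by rw [occupancy_eq_zero hx, cgfp_zero]

theorem cgfp_of_one_le {k : ℕ} (hk : 1 ≤ k) (β : ℝ) :
    cgfp μ k β = cgf μ (k * β) - k * cgf μ β := by
  rcases hk.eq_or_lt with rfl | hk
  · simp [cgfp]
  · exact if_pos hk

theorem integral_exp_mul_sub_cgf [NeZero μ]
    (hμ : ∀ b : ℝ, Integrable (fun x => Real.exp (b * x)) μ) {k : ℕ} (hk : 1 ≤ k) (β : ℝ) :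
    ∫ x, Real.exp (k * (β * x - cgf μ β)) ∂μ = Real.exp (cgfp μ k β) := by
  have hmgf : ∫ x, Real.exp ((k * β) * x) ∂μ = Real.exp (cgf μ (k * β)) :=
    (exp_cgf (X := id) (hμ _)).symm
  simp_rw [mul_sub, Real.exp_sub, ← mul_assoc]
  rw [integral_div, hmgf, cgfp_of_one_le μ hk, Real.exp_sub]

theorem cgfp_gaussianReal (k : ℕ) (β : ℝ) :
    cgfp (gaussianReal 0 1) k β = β ^ 2 * (k * (k - 1)) / 2 := by
  rcases Nat.lt_or_ge k 1 with hk | hk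
  · obtain rfl : k = 0 := by omega
    simp
  · rw [cgfp_of_one_le _ hk, cgf_eq_cgf_id, cgf_gaussianReal (μ := 0) (v := 1) (by simp),
      cgf_gaussianReal (μ := 0) (v := 1) (by simp)]
    push_cast
    ring

end Cumulants

def replicaWeight (μ : Measure ℝ) (β : ℝ) (s t : ℕ) {ι α : Type*} [Fintype ι] [DecidableEq α]
    (S : ι → ℕ → α) : ℝ :=
  Real.exp (∑ n ∈ Icc s t, ∑' x, cgfp μ (occupancy (fun i => S i n) x) β)

section Annealing

variable (μ : Measure ℝ) (β : ℝ) {ι α : Type*} [Fintype ι]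

theorem prod_exp_sub_cgf_eq [DecidableEq α] (P : ι → α) (η : α → ℝ) :
    ∏ i, Real.exp (β * η (P i) - cgf μ β)
      = ∏ x ∈ univ.image P, Real.exp (occupancy P x * (β * η x - cgf μ β)) := by
  simp only [prod_comp_eq_prod_pow_occupancy (fun x => Real.exp (β * η x - cgf μ β)),
    Real.exp_nat_mul]

theorem prod_exp_sum_sub_cgf_eq (s t : ℕ) (S : ι → ℕ → α) (ω : ℕ → α → ℝ) :
    ∏ i, Real.exp (∑ n ∈ Icc s t, (β * ω n (S i n) - cgf μ β))
      = ∏ n ∈ Icc s t, ∏ i, Real.exp (β * ω n (S i n) - cgf μ β) := by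
  simp only [Real.exp_sum]
  exact Finset.prod_comm

variable [IsProbabilityMeasure μ] [DecidableEq α]

theorem integrable_prod_exp_sub_cgf (hμ : ∀ b : ℝ, Integrable (fun x => Real.exp (b * x)) μ)
    (P : ι → α) :
    Integrable (fun η : α → ℝ => ∏ i, Real.exp (β * η (P i) - cgf μ β))
      (Measure.infinitePi fun _ => μ) := by
  simp only [prod_exp_sub_cgf_eq]
  refine integrable_finset_prod_infinitePi _ _
    (f := fun x y => Real.exp (occupancy P x * (β * y - cgf μ β))) fun x => ?_
  simp only [mul_sub, Real.exp_sub, ← mul_assoc]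
  exact (hμ _).div_const _

theorem integral_prod_exp_sub_cgf (hμ : ∀ b : ℝ, Integrable (fun x => Real.exp (b * x)) μ)
    (P : ι → α) :
    ∫ η : α → ℝ, ∏ i, Real.exp (β * η (P i) - cgf μ β) ∂(Measure.infinitePi fun _ => μ)
      = Real.exp (∑' x, cgfp μ (occupancy P x) β) := by
  simp only [prod_exp_sub_cgf_eq]
  rw [integral_finset_prod_infinitePi _ _
      (f := fun x y => Real.exp (occupancy P x * (β * y - cgf μ β))) fun x => by fun_prop,
    tsum_cgfp_occupancy, Real.exp_sum]
  exact Finset.prod_congr rfl fun x hx =>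
    integral_exp_mul_sub_cgf μ hμ (one_le_occupancy hx) β

theorem integrable_prod_exp_sum_sub_cgf
    (hμ : ∀ b : ℝ, Integrable (fun x => Real.exp (b * x)) μ) (s t : ℕ) (S : ι → ℕ → α) :
    Integrable (fun ω : ℕ → α → ℝ => ∏ i, Real.exp (∑ n ∈ Icc s t, (β * ω n (S i n) - cgf μ β)))
      (Measure.infinitePi fun _ => Measure.infinitePi fun _ => μ) := by
  simp only [prod_exp_sum_sub_cgf_eq]
  exact integrable_finset_prod_infinitePi _ _
    (X := fun _ => α → ℝ) (f := fun n η => ∏ i, Real.exp (β * η (S i n) - cgf μ β)) fun n =>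
    integrable_prod_exp_sub_cgf μ β hμ fun i => S i n

theorem integral_prod_exp_sum_sub_cgf
    (hμ : ∀ b : ℝ, Integrable (fun x => Real.exp (b * x)) μ) (s t : ℕ) (S : ι → ℕ → α) :
    ∫ ω : ℕ → α → ℝ, ∏ i, Real.exp (∑ n ∈ Icc s t, (β * ω n (S i n) - cgf μ β))
        ∂(Measure.infinitePi fun _ => Measure.infinitePi fun _ => μ)
      = replicaWeight μ β s t S := by
  simp only [prod_exp_sum_sub_cgf_eq]
  rw [integral_finset_prod_infinitePi _ _
      (X := fun _ => α → ℝ) (f := fun n η => ∏ i, Real.exp (β * η (S i n) - cgf μ β)) fun n =>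
      (integrable_prod_exp_sub_cgf μ β hμ fun i => S i n).aestronglyMeasurable,
    replicaWeight, Real.exp_sum]
  exact Finset.prod_congr rfl fun n _ => integral_prod_exp_sub_cgf μ β hμ fun i => S i n

end Annealing

section Walks

theorem Ewalk_add_left (q t : ℕ) (a : ℤ × ℤ) (X : Fin q → ℤ × ℤ)
    (f : (Fin q → ℕ → ℤ × ℤ) → ℝ) :
    Ewalk q t (fun i => a + X i) f = Ewalk q t X fun S => f fun i n => a + S i n := by
  unfold Ewalk walkPath
  simp only [add_assoc]

theorem Ewalk_nonneg (q t : ℕ) (X : Fin q → ℤ × ℤ) {f : (Fin q → ℕ → ℤ × ℤ) → ℝ}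
    (hf : ∀ S, 0 ≤ f S) : 0 ≤ Ewalk q t X f :=
  div_nonneg (Finset.sum_nonneg fun _ _ => hf _) (by positivity)

theorem Ewalk_one (t : ℕ) (x : ℤ × ℤ) (g : (ℕ → ℤ × ℤ) → ℝ) :
    Ewalk 1 t (fun _ => x) (fun S => g (S 0))
      = (∑ ε : Fin t → steps, g (walkPath x fun k => ε k)) / 4 ^ t := by
  rw [Ewalk, one_mul]
  congr 1
  exact (Equiv.funUnique (Fin 1) _).sum_comp fun ε : Fin t → steps => g (walkPath x fun k => ε k)

theorem prod_Ewalk_one (q t : ℕ) (X : Fin q → ℤ × ℤ) (g : Fin q → (ℕ → ℤ × ℤ) → ℝ) :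
    ∏ i, Ewalk 1 t (fun _ => X i) (fun S => g i (S 0)) = Ewalk q t X fun S => ∏ i, g i (S i) := by
  simp only [Ewalk_one]
  rw [Finset.prod_div_distrib, Finset.prod_univ_sum, Fintype.piFinset_univ, Finset.prod_const,
    card_univ, Fintype.card_fin, ← pow_mul, mul_comm t]
  rfl

theorem integrable_Ewalk {Ω : Type*} [MeasurableSpace Ω] {P : Measure Ω} (q t : ℕ)
    (X : Fin q → ℤ × ℤ) {F : (Fin q → ℕ → ℤ × ℤ) → Ω → ℝ} (hF : ∀ S, Integrable (F S) P) :
    Integrable (fun ω => Ewalk q t X fun S => F S ω) P :=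
  (integrable_finsetSum _ fun _ _ => hF _).div_const _

theorem integral_Ewalk {Ω : Type*} [MeasurableSpace Ω] {P : Measure Ω} (q t : ℕ)
    (X : Fin q → ℤ × ℤ) {F : (Fin q → ℕ → ℤ × ℤ) → Ω → ℝ} (hF : ∀ S, Integrable (F S) P) :
    ∫ ω, (Ewalk q t X fun S => F S ω) ∂P = Ewalk q t X fun S => ∫ ω, F S ω ∂P := by
  simp only [Ewalk]
  rw [integral_div, integral_finsetSum _ fun _ _ => hF _]

end Walks

theorem prod_le_inv_card_mul_sum_pow {ι : Type*} [Fintype ι] [Nonempty ι] (a : ι → ℝ)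
    (ha : ∀ i, 0 ≤ a i) : ∏ i, a i ≤ (Fintype.card ι : ℝ)⁻¹ * ∑ i, a i ^ Fintype.card ι := by
  set q := Fintype.card ι
  have hq : (q : ℝ) ≠ 0 := Nat.cast_ne_zero.mpr Fintype.card_ne_zero
  have amgm := Real.geom_mean_le_arith_mean_weighted univ (fun _ => (q : ℝ)⁻¹)
    (fun i => a i ^ q) (fun _ _ => by positivity)
    (by rw [Finset.sum_const, card_univ, nsmul_eq_mul, mul_inv_cancel₀ hq])
    (fun i _ => pow_nonneg (ha i) q)
  calc ∏ i, a i = ∏ i, (a i ^ q) ^ (q : ℝ)⁻¹ :=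
        Finset.prod_congr rfl fun i _ =>
          (Real.pow_rpow_inv_natCast (ha i) Fintype.card_ne_zero).symm
    _ ≤ ∑ i, (q : ℝ)⁻¹ * a i ^ q := amgm
    _ = (q : ℝ)⁻¹ * ∑ i, a i ^ q := (Finset.mul_sum ..).symm

theorem replicaWeight_add_left (μ : Measure ℝ) (β : ℝ) (s t : ℕ) {ι α : Type*} [Fintype ι]
    [DecidableEq α] [AddGroup α] (a : α) (S : ι → ℕ → α) :
    replicaWeight μ β s t (fun i n => a + S i n) = replicaWeight μ β s t S := by
  refine congrArg Real.exp (Finset.sum_congr rfl fun n _ => ?_)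
  rw [← (Equiv.addLeft a).tsum_eq]
  simp only [Equiv.coe_addLeft, occupancy_add_left]

def envLaw (μ : Measure ℝ) : Measure (ℕ → ℤ × ℤ → ℝ) :=
  Measure.infinitePi fun _ => Measure.infinitePi fun _ => μ

def coordinateField (n : ℕ) (x : ℤ × ℤ) (ω : ℕ → ℤ × ℤ → ℝ) : ℝ := ω n x

section Moments

variable (μ : Measure ℝ) (β : ℝ) (s t : ℕ)

theorem W_nonneg (x : ℤ × ℤ) (ω : ℕ → ℤ × ℤ → ℝ) : 0 ≤ W μ coordinateField s t x β ω :=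
  Ewalk_nonneg 1 t _ fun _ => (Real.exp_pos _).le

theorem prod_W_eq {p : ℕ} (X : Fin p → ℤ × ℤ) (ω : ℕ → ℤ × ℤ → ℝ) :
    ∏ i, W μ coordinateField s t (X i) β ω
      = Ewalk p t X fun S => ∏ i, Real.exp (∑ n ∈ Icc s t, (β * ω n (S i n) - cgf μ β)) :=
  prod_Ewalk_one p t X fun _ S => Real.exp (∑ n ∈ Icc s t, (β * ω n (S n) - cgf μ β))

variable [IsProbabilityMeasure μ]

theorem integrable_prod_W (hμ : ∀ b : ℝ, Integrable (fun x => Real.exp (b * x)) μ)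
    {p : ℕ} (X : Fin p → ℤ × ℤ) :
    Integrable (fun ω => ∏ i, W μ coordinateField s t (X i) β ω) (envLaw μ) := by
  simp only [prod_W_eq]
  exact integrable_Ewalk p t X fun S => integrable_prod_exp_sum_sub_cgf μ β hμ s t S

theorem integral_prod_W (hμ : ∀ b : ℝ, Integrable (fun x => Real.exp (b * x)) μ)
    {p : ℕ} (X : Fin p → ℤ × ℤ) :
    ∫ ω, ∏ i, W μ coordinateField s t (X i) β ω ∂envLaw μ
      = Ewalk p t X (replicaWeight μ β s t) := by
  simp only [prod_W_eq, envLaw]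
  rw [integral_Ewalk p t X fun S => integrable_prod_exp_sum_sub_cgf μ β hμ s t S]
  simp only [integral_prod_exp_sum_sub_cgf μ β hμ]

theorem Ewalk_replicaWeight_le (hμ : ∀ b : ℝ, Integrable (fun x => Real.exp (b * x)) μ)
    {p : ℕ} (X : Fin p → ℤ × ℤ) :
    Ewalk p t X (replicaWeight μ β s t) ≤ Ewalk p t (fun _ => 0) (replicaWeight μ β s t) := by
  rcases isEmpty_or_nonempty (Fin p) with _ | hp
  · rw [Subsingleton.elim X fun _ => 0]
  have h_const (y : ℤ × ℤ) : Ewalk p t (fun _ => y) (replicaWeight μ β s t)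
      = Ewalk p t (fun _ => 0) (replicaWeight μ β s t) := by
    simpa only [add_zero, replicaWeight_add_left] using
      Ewalk_add_left p t y (fun _ => 0) (replicaWeight μ β s t)
  have h_amgm (ω : ℕ → ℤ × ℤ → ℝ) : ∏ i, W μ coordinateField s t (X i) β ω
      ≤ (p : ℝ)⁻¹ * ∑ j, ∏ _i : Fin p, W μ coordinateField s t (X j) β ω := by
    simpa only [Fintype.card_fin, Finset.prod_const, card_univ] using
      prod_le_inv_card_mul_sum_pow _ fun i => W_nonneg μ β s t (X i) ω
  have hp0 : (p : ℝ) ≠ 0 := by simpa using (Fintype.card_ne_zero : Fintype.card (Fin p) ≠ 0)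
  calc Ewalk p t X (replicaWeight μ β s t)
      = ∫ ω, ∏ i, W μ coordinateField s t (X i) β ω ∂envLaw μ :=
        (integral_prod_W μ β s t hμ X).symm
    _ ≤ ∫ ω, (p : ℝ)⁻¹ * ∑ j, ∏ _i : Fin p, W μ coordinateField s t (X j) β ω ∂envLaw μ :=
        integral_mono (integrable_prod_W μ β s t hμ X)
          ((integrable_finsetSum _ fun j _ =>
            integrable_prod_W μ β s t hμ fun _ => X j).const_mul _) h_amgm
    _ = (p : ℝ)⁻¹ * ∑ j, Ewalk p t (fun _ => X j) (replicaWeight μ β s t) := by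
        rw [integral_const_mul,
          integral_finsetSum _ fun j _ => integrable_prod_W μ β s t hμ fun _ => X j]
        simp only [integral_prod_W μ β s t hμ]
    _ = Ewalk p t (fun _ => 0) (replicaWeight μ β s t) := by
        simp only [h_const, Finset.sum_const, card_univ, Fintype.card_fin, nsmul_eq_mul,
          inv_mul_cancel_left₀ hp0]

end Moments

section Gaussian

theorem sum_sum_ite_ne_eq_two_mul_sum_sum_ite_lt {ι R : Type*} [Fintype ι] [LinearOrder ι]
    [Semiring R] (g : ι → ι → R) (hg : ∀ i j, g i j = g j i) :
    ∑ i, ∑ j, (if i ≠ j then g i j else 0) = 2 * ∑ i, ∑ j, (if i < j then g i j else 0) := by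
  have h_split (i j : ι) : (if i ≠ j then g i j else 0)
      = (if i < j then g i j else 0) + (if j < i then g j i else 0) := by
    rcases lt_trichotomy i j with h | rfl | h
    · simp [h, h.ne, h.not_gt]
    · simp
    · simp [h, h.ne', h.not_gt, hg i j]
  simp only [h_split, Finset.sum_add_distrib]
  rw [Finset.sum_comm (f := fun i j => if j < i then g j i else 0), two_mul]

theorem sum_occupancy_mul_sub_one {ι α R : Type*} [Fintype ι] [LinearOrder ι] [DecidableEq α]
    [CommRing R] (P : ι → α) :
    ∑ x ∈ univ.image P, (occupancy P x : R) * (occupancy P x - 1)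
      = 2 * ∑ i, ∑ j, (if i < j ∧ P i = P j then 1 else 0) := by
  have h_pointwise (i j : ι) : (if P j = P i then (1 : R) else 0) - (if i = j then 1 else 0)
      = if i ≠ j then (if P i = P j then 1 else 0) else 0 := by
    by_cases h : i = j
    · simp [h]
    · simp [h, eq_comm]
  rw [← sum_comp_eq_sum_occupancy_mul (fun x => (occupancy P x : R) - 1)]
  simp only [ite_and]
  rw [← sum_sum_ite_ne_eq_two_mul_sum_sum_ite_lt _ fun i j => by simp only [eq_comm]]
  simp only [← h_pointwise, Finset.sum_sub_distrib, Finset.sum_ite_eq, mem_univ, if_true,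
    occupancy, Nat.cast_sum, Nat.cast_ite, Nat.cast_one, Nat.cast_zero]

theorem tsum_cgfp_gaussianReal_occupancy {ι α : Type*} [Fintype ι] [LinearOrder ι]
    [DecidableEq α] (P : ι → α) (β : ℝ) :
    ∑' x, cgfp (gaussianReal 0 1) (occupancy P x) β
      = β ^ 2 * ∑ i, ∑ j, (if i < j ∧ P i = P j then 1 else 0) := by
  rw [tsum_cgfp_occupancy, ← inv_mul_cancel_left₀ two_ne_zero (∑ i, ∑ j, _),
    ← sum_occupancy_mul_sub_one, Finset.mul_sum, Finset.mul_sum]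
  simp only [cgfp_gaussianReal]
  exact Finset.sum_congr rfl fun x _ => by ring

theorem replicaWeight_gaussianReal (β : ℝ) (s t p : ℕ) (S : Fin p → ℕ → ℤ × ℤ) :
    replicaWeight (gaussianReal 0 1) β s t S = Real.exp (β ^ 2 * pairSum p s t S) := by
  simp only [replicaWeight, pairSum, Finset.mul_sum, tsum_cgfp_gaussianReal_occupancy]

end Gaussian

theorem stmt9_general
    (μ : Measure ℝ) (hμ : EnvLaw μ)
    (p : ℕ) (β : ℝ) (s t : ℕ)
    (X : Fin p → ℤ × ℤ) :
    (Ewalk p t X (fun S => Real.exp (∑ n ∈ Finset.Icc s t,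
        ∑' x : ℤ × ℤ, cgfp μ (∑ i : Fin p, if S i n = x then 1 else 0) β)) ≤
      Ewalk p t (fun _ => 0) (fun S => Real.exp (∑ n ∈ Finset.Icc s t,
        ∑' x : ℤ × ℤ, cgfp μ (∑ i : Fin p, if S i n = x then 1 else 0) β))) ∧
    (Ewalk p t X (fun S => Real.exp (β ^ 2 * pairSum p s t S)) ≤
      Ewalk p t (fun _ => 0) (fun S => Real.exp (β ^ 2 * pairSum p s t S))) := by
  have := hμ.prob
  refine ⟨Ewalk_replicaWeight_le μ β s t hμ.exp_moments X, ?_⟩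
  simp only [← replicaWeight_gaussianReal]
  exact Ewalk_replicaWeight_le _ β s t integrable_exp_mul_gaussianReal X

theorem stmt9
    (μ : Measure ℝ) (hμ : EnvLaw μ)
    (p : ℕ) (β : ℝ) (hβ : 0 ≤ β) (s t : ℕ) (hs : 1 ≤ s) (hst : s ≤ t)
    (X : Fin p → ℤ × ℤ) :
    (Ewalk p t X (fun S => Real.exp (∑ n ∈ Finset.Icc s t,
        ∑' x : ℤ × ℤ, cgfp μ (∑ i : Fin p, if S i n = x then 1 else 0) β)) ≤
      Ewalk p t (fun _ => 0) (fun S => Real.exp (∑ n ∈ Finset.Icc s t,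
        ∑' x : ℤ × ℤ, cgfp μ (∑ i : Fin p, if S i n = x then 1 else 0) β))) ∧
    (Ewalk p t X (fun S => Real.exp (β ^ 2 * pairSum p s t S)) ≤
      Ewalk p t (fun _ => 0) (fun S => Real.exp (β ^ 2 * pairSum p s t S))) :=
  stmt9_general μ hμ p β s t X

end DP
end
end

section
/- Let μ be a probability law on ℝ with mean 0, variance 1 and finite exponential moments, and set Λ(β) := log E[e^{βω}] for ω ∼ μ and Λ_p(β) := Λ(pβ) − pΛ(β). For every q₀ > 0 there exists a constant C = C(μ,q₀) > 0 such that for all integers p ≥ 1 and all β > 0 with pβ ≤ q₀: Λ_p(β) ≤ (1 + C·p·β) · β² · p(p−1)/2. -/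
open MeasureTheory ProbabilityTheory Filter Finset

noncomputable section

/-!
Write `Λ` for the cumulant generating function. By Taylor's theorem with Lagrange remainder,
`Λ t = Λ'' u * t ^ 2 / 2` for some `u ∈ (0, t)`; since `Λ'' 0 = Var ω = 1` and `Λ''` is Lipschitz
on `[0, q₀]` (`Λ` is analytic), `|Λ t - t ^ 2 / 2| ≤ L * t ^ 3` there. Using this upper bound at
`t = p β` and the lower bound at `t = β` gives `Λ_p β ≤ β ^ 2 p (p - 1) / 2 + L β ^ 3 (p ^ 3 + p)`,
and `p ^ 3 + p ≤ 5/2 · p ^ 2 (p - 1)` for `p ≥ 2`.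
-/

open Set

namespace ProbabilityTheory

variable {Ω : Type*} [MeasurableSpace Ω] {μ : Measure Ω} [IsProbabilityMeasure μ] {X : Ω → ℝ}

lemma iteratedDeriv_two_cgf_zero (h : 0 ∈ interior (integrableExpSet X μ)) (hc : μ[X] = 0) :
    iteratedDeriv 2 (cgf X μ) 0 = μ[fun ω ↦ X ω ^ 2] := by
  simp [iteratedDeriv_two_cgf h, deriv_cgf_zero h, hc]

lemma exists_abs_cgf_sub_sq_div_two_le {T : ℝ} (hT : Icc 0 T ⊆ interior (integrableExpSet X μ))
    (hc : μ[X] = 0) (hv : μ[fun ω ↦ X ω ^ 2] = 1) :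
    ∃ L > 0, ∀ t ∈ Ioc 0 T, |cgf X μ t - t ^ 2 / 2| ≤ L * t ^ 3 := by
  have hsmooth : ContDiffOn ℝ 1 (iteratedDeriv 2 (cgf X μ)) (Icc 0 T) := by
    rw [iteratedDeriv_eq_iterate]
    exact ((analyticOnNhd_cgf.iterated_deriv 2).contDiffOn isOpen_interior.uniqueDiffOn).mono hT
  obtain ⟨K, hK⟩ := hsmooth.exists_lipschitzOnWith one_ne_zero (convex_Icc 0 T) isCompact_Icc
  refine ⟨K / 2 + 1, by positivity, fun t ⟨ht, htT⟩ ↦ ?_⟩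
  obtain ⟨u, ⟨hu, hut⟩, hΛ⟩ :=
    exists_cgf_eq_iteratedDeriv_two_cgf_mul ht hc ((Icc_subset_Icc_right htT).trans hT)
  have h0 : (0 : ℝ) ∈ Icc 0 T := ⟨le_rfl, ht.le.trans htT⟩
  have hdev : |iteratedDeriv 2 (cgf X μ) u - 1| ≤ K * t := by
    have := hK.dist_le_mul u ⟨hu.le, hut.le.trans htT⟩ 0 h0
    rw [Real.dist_eq, Real.dist_eq, sub_zero, abs_of_pos hu,
      iteratedDeriv_two_cgf_zero (hT h0) hc, hv] at this
    exact this.trans (by gcongr)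
  calc |cgf X μ t - t ^ 2 / 2| = |iteratedDeriv 2 (cgf X μ) u - 1| * (t ^ 2 / 2) := by
        rw [hΛ, mul_div_assoc, ← sub_one_mul, abs_mul,
          abs_of_nonneg (a := t ^ 2 / 2) (by positivity)]
    _ ≤ K * t * (t ^ 2 / 2) := by gcongr
    _ ≤ (K / 2 + 1) * t ^ 3 := by nlinarith [pow_pos ht 3]

end ProbabilityTheory

lemma apply_mul_sub_mul_apply_le_of_abs_sub_sq_div_two_le {f : ℝ → ℝ} {L T : ℝ} (hL : 0 ≤ L)
    (hf : ∀ t ∈ Ioc 0 T, |f t - t ^ 2 / 2| ≤ L * t ^ 3) {p β : ℝ} (hp : 2 ≤ p) (hβ : 0 < β)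
    (hpβ : p * β ≤ T) :
    f (p * β) - p * f β ≤ (1 + 5 * L * p * β) * (β ^ 2 * (p * (p - 1)) / 2) := by
  have hβT : β ≤ T := le_trans (by nlinarith) hpβ
  have hup := (abs_le.mp (hf (p * β) ⟨by positivity, hpβ⟩)).2
  have hlo := (abs_le.mp (hf β ⟨hβ, hβT⟩)).1
  have hpoly : p ^ 3 + p ≤ 5 / 2 * p ^ 2 * (p - 1) := by nlinarith
  have := mul_le_mul_of_nonneg_left hpoly (by positivity : 0 ≤ L * β ^ 3)
  nlinarith

namespace DP

theorem stmt10_general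
    (μ : Measure ℝ) (hμ : EnvLaw μ) (q₀ : ℝ) :
    ∃ C : ℝ, 0 < C ∧ ∀ p : ℕ, 1 ≤ p → ∀ β : ℝ, 0 < β → (p : ℝ) * β ≤ q₀ →
      cgfp μ p β ≤ (1 + C * p * β) * (β ^ 2 * ((p : ℝ) * ((p : ℝ) - 1)) / 2) := by
  have := hμ.prob
  have hexp : integrableExpSet id μ = univ := eq_univ_of_forall hμ.exp_moments
  obtain ⟨L, hL, hΛ⟩ := exists_abs_cgf_sub_sq_div_two_le (X := id) (T := q₀)
    (by simp [hexp]) hμ.mean_zero hμ.variance_one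
  refine ⟨5 * L, by positivity, fun p hp β hβ hpβ ↦ ?_⟩
  rcases Nat.lt_or_ge p 2 with hp1 | hp2
  · obtain rfl : p = 1 := by omega
    simp [cgfp]
  rw [cgfp, if_pos hp2]
  -- `cgf μ` is `ProbabilityTheory.cgf id μ` by definition
  exact apply_mul_sub_mul_apply_le_of_abs_sub_sq_div_two_le hL.le hΛ (by exact_mod_cast hp2)
    hβ hpβ

theorem stmt10
    (μ : Measure ℝ) (hμ : EnvLaw μ) (q₀ : ℝ) (hq₀ : 0 < q₀) :
    ∃ C : ℝ, 0 < C ∧ ∀ p : ℕ, 1 ≤ p → ∀ β : ℝ, 0 < β → (p : ℝ) * β ≤ q₀ →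
      cgfp μ p β ≤ (1 + C * p * β) * (β ^ 2 * ((p : ℝ) * ((p : ℝ) - 1)) / 2) :=
  stmt10_general μ hμ q₀

end DP
end
end

section
/- Let S¹,…,S^q be independent simple random walks on ℤ². For n ≥ 1 let m_n^q := #{ i ∈ {1,…,q} : there exists j ≠ i with S_n^i = S_n^j } and A_{n,p} := { m_n^q ≤ p }. Then for all integers p, q ≥ 2 and all n ≥ 1: sup over X ∈ (ℤ²)^q of P_X^{⊗q}( A_{n,p}^c ) ≤ q^p · n^{−p/3}. -/
open MeasureTheory ProbabilityTheory Filter Finset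

noncomputable section

namespace DP

/-!
Let `k = ⌈p / 3⌉`. Removing a colliding pair `{i, j}` from a set of walkers lowers the number
of colliding walkers by at most three (at most one walker outside `{i, j}` loses all its
partners), so if more than `p` walkers collide there are `k` pairwise disjoint colliding
pairs. A union bound over the at most `q ^ (2k)` choices of these pairs, with independence of
the walks, leaves the probability that two walks started at given points meet at time `n`.
In the diagonal coordinates `x + y`, `x - y` the steps of the walk are two independent signs,
so this probability is at most `(binom(2n, n) / 4 ^ n) ^ 2 ≤ 1 / (3n + 1)`.
-/

open Function

theorem three_mul_add_one_mul_centralBinom_sq_le (n : ℕ) :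
    (3 * n + 1) * n.centralBinom ^ 2 ≤ 16 ^ n := by
  induction n with
  | zero => simp
  | succ n ih =>
    have hrec := Nat.succ_mul_centralBinom_succ n
    refine Nat.le_of_mul_le_mul_left (c := (n + 1) ^ 2) ?_ (by positivity)
    calc (n + 1) ^ 2 * ((3 * (n + 1) + 1) * (n + 1).centralBinom ^ 2)
        = (3 * n + 4) * ((n + 1) * (n + 1).centralBinom) ^ 2 := by ring
      _ = (3 * n + 4) * (2 * (2 * n + 1)) ^ 2 * n.centralBinom ^ 2 := by rw [hrec]; ring
      _ ≤ 16 * (n + 1) ^ 2 * (3 * n + 1) * n.centralBinom ^ 2 :=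
        Nat.mul_le_mul_right _ (by nlinarith)
      _ = (n + 1) ^ 2 * (16 * ((3 * n + 1) * n.centralBinom ^ 2)) := by ring
      _ ≤ (n + 1) ^ 2 * 16 ^ (n + 1) := by rw [pow_succ' 16 n]; gcongr

theorem centralBinom_sq_pow_mul_le {q k : ℕ} (n : ℕ) (h2k : 2 * k ≤ q) :
    (n.centralBinom ^ 2) ^ k * (4 ^ n) ^ (q - 2 * k) * (3 * n + 1) ^ k ≤ 4 ^ (q * n) :=
  calc _ = ((3 * n + 1) * n.centralBinom ^ 2) ^ k * (4 ^ n) ^ (q - 2 * k) := by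
        rw [mul_pow]; ring
    _ ≤ (16 ^ n) ^ k * (4 ^ n) ^ (q - 2 * k) := by
        gcongr; exact three_mul_add_one_mul_centralBinom_sq_le n
    _ = 4 ^ (q * n) := by
        obtain ⟨r, rfl⟩ : ∃ r, q = 2 * k + r := ⟨q - 2 * k, by omega⟩
        rw [Nat.add_sub_cancel_left, ← pow_mul, ← pow_mul, show 16 = 4 ^ 2 from rfl, ← pow_mul,
          ← pow_add]
        ring_nf

def boolSign (b : Bool) : ℤ := if b then 1 else -1

theorem boolSign_not (b : Bool) : boolSign (!b) = -boolSign b := by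
  cases b <;> rfl

theorem sum_boolSign {J : Type*} [Fintype J] (γ : J → Bool) :
    ∑ i, boolSign (γ i) = 2 * #{i | γ i} - Fintype.card J := by
  have h : ∀ b, boolSign b = 2 * (if b then 1 else 0) - 1 := by decide
  simp only [h, sum_sub_distrib, ← mul_sum, sum_boole, sum_const, card_univ, nsmul_eq_mul,
    mul_one]

theorem card_filter_sum_boolSign_le {J : Type*} [Fintype J] [DecidableEq J] (c : ℤ) :
    #{γ : J → Bool | ∑ i, boolSign (γ i) = c} ≤
      (Fintype.card J).choose (Fintype.card J / 2) := by
  calc #{γ : J → Bool | ∑ i, boolSign (γ i) = c}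
      ≤ #(powersetCard ((c + Fintype.card J) / 2).toNat (univ : Finset J)) := by
        refine card_le_card_of_injOn (fun γ => ({i | γ i} : Finset J)) (fun γ hγ => ?_)
          (fun γ _ γ' _ h => ?_)
        · simp only [coe_filter, mem_univ, true_and, Set.mem_ofPred_eq, sum_boolSign] at hγ
          simp only [mem_coe, mem_powersetCard, subset_univ, true_and]
          omega
        · funext i
          simpa using congr(i ∈ $h)
    _ ≤ (Fintype.card J).choose (Fintype.card J / 2) := by
        rw [card_powersetCard, card_univ]
        exact Nat.choose_le_middle _ _

def diagSigns (s : steps) : Bool × Bool :=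
  (decide ((s : ℤ × ℤ).1 + (s : ℤ × ℤ).2 = 1), decide ((s : ℤ × ℤ).1 - (s : ℤ × ℤ).2 = 1))

theorem diagSigns_injective : Injective diagSigns := by
  decide

theorem boolSign_diagSigns_fst (s : steps) :
    boolSign (diagSigns s).1 = (s : ℤ × ℤ).1 + (s : ℤ × ℤ).2 := by
  revert s
  decide

theorem boolSign_diagSigns_snd (s : steps) :
    boolSign (diagSigns s).2 = (s : ℤ × ℤ).1 - (s : ℤ × ℤ).2 := by
  revert s
  decide

theorem card_filter_sum_eq_sum_add_le (n : ℕ) (d : ℤ × ℤ) :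
    #{ab : (Fin n → steps) × (Fin n → steps) |
        ∑ k, (ab.1 k : ℤ × ℤ) = ∑ k, (ab.2 k : ℤ × ℤ) + d} ≤ n.centralBinom ^ 2 := by
  set T : ℤ → Finset (Fin n ⊕ Fin n → Bool) := fun c => {γ | ∑ i, boolSign (γ i) = c}
  have hT : ∀ c, #(T c) ≤ n.centralBinom := fun c =>
    (card_filter_sum_boolSign_le c).trans
      (by simpa [← two_mul] using Nat.choose_le_centralBinom _ n)
  -- signs of the diagonal coordinates, flipped on the second path to turn differences into sums
  let φ (ab : (Fin n → steps) × (Fin n → steps)) :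
      (Fin n ⊕ Fin n → Bool) × (Fin n ⊕ Fin n → Bool) :=
    (Sum.elim (fun k => (diagSigns (ab.1 k)).1) (fun k => !(diagSigns (ab.2 k)).1),
      Sum.elim (fun k => (diagSigns (ab.1 k)).2) (fun k => !(diagSigns (ab.2 k)).2))
  calc _ ≤ #(T (d.1 + d.2) ×ˢ T (d.1 - d.2)) := by
        refine card_le_card_of_injOn φ (fun ab hab => ?_) (fun ab _ ab' _ h => ?_)
        · have hab : ∑ k, (ab.1 k : ℤ × ℤ) = ∑ k, (ab.2 k : ℤ × ℤ) + d := by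
            simpa using hab
          have h1 := congr(Prod.fst $hab)
          have h2 := congr(Prod.snd $hab)
          simp only [Prod.fst_add, Prod.snd_add, Prod.fst_sum, Prod.snd_sum] at h1 h2
          simp only [T, φ, coe_product, coe_filter, mem_univ, true_and, Set.mem_prod,
            Set.mem_ofPred_eq, Fintype.sum_sum_type, Sum.elim_inl, Sum.elim_inr, boolSign_not,
            sum_neg_distrib, boolSign_diagSigns_fst, boolSign_diagSigns_snd, sum_add_distrib,
            sum_sub_distrib]
          constructor <;> linarith
        · simp only [φ, Prod.mk.injEq] at h
          obtain ⟨hu, hv⟩ := h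
          refine Prod.ext (funext fun k => diagSigns_injective ?_)
            (funext fun k => diagSigns_injective ?_)
          · exact Prod.ext (congr_fun hu (.inl k)) (congr_fun hv (.inl k))
          · exact Prod.ext (by simpa using congr_fun hu (.inr k))
              (by simpa using congr_fun hv (.inr k))
    _ ≤ n.centralBinom ^ 2 := by
        rw [card_product, sq]
        exact Nat.mul_le_mul (hT _) (hT _)

theorem card_steps : #steps = 4 := rfl

theorem card_filter_forall_collide_le {ι κ : Type*} [Fintype ι] [DecidableEq ι] [Fintype κ]
    (x : ι → ℤ × ℤ) (e : κ ⊕ κ ↪ ι) (n : ℕ) :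
    #{δ : ι → Fin n → steps | ∀ l,
        x (e (.inl l)) + ∑ m, (δ (e (.inl l)) m : ℤ × ℤ) =
          x (e (.inr l)) + ∑ m, (δ (e (.inr l)) m : ℤ × ℤ)} ≤
      (n.centralBinom ^ 2) ^ Fintype.card κ *
        (4 ^ n) ^ (Fintype.card ι - 2 * Fintype.card κ) := by
  classical
  set P : κ → Finset ((Fin n → steps) × (Fin n → steps)) := fun l =>
    {ab | ∑ m, (ab.1 m : ℤ × ℤ) = ∑ m, (ab.2 m : ℤ × ℤ) + (x (e (.inr l)) - x (e (.inl l)))}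
  set C : Finset ι := (univ.map e)ᶜ
  have hC : #C = Fintype.card ι - 2 * Fintype.card κ := by
    rw [card_compl, card_map, card_univ, Fintype.card_sum, two_mul]
  calc _ ≤ #(Fintype.piFinset P ×ˢ (univ : Finset (C → Fin n → steps))) := by
        refine card_le_card_of_injOn
          (fun δ => (fun l => (δ (e (.inl l)), δ (e (.inr l))), fun i => δ i))
          (fun δ hδ => ?_) (fun δ _ δ' _ h => ?_)
        · simp only [coe_filter, mem_univ, true_and, Set.mem_ofPred_eq] at hδ
          simp only [mem_coe, mem_product, Fintype.mem_piFinset, mem_univ, and_true, P,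
            mem_filter, true_and]
          exact fun l => by linear_combination hδ l
        · simp only [Prod.mk.injEq] at h
          funext i
          by_cases hi : i ∈ C
          · exact congr_fun h.2 ⟨i, hi⟩
          · obtain ⟨l | l, -, rfl⟩ := mem_map.mp (notMem_compl.mp hi)
            · exact congrArg Prod.fst (congr_fun h.1 l)
            · exact congrArg Prod.snd (congr_fun h.1 l)
    _ ≤ _ := by
        rw [card_product, Fintype.card_piFinset, card_univ, Fintype.card_fun, Fintype.card_fun,
          Fintype.card_coe, Fintype.card_coe, hC, Fintype.card_fin, card_steps]
        gcongr
        calc ∏ l, #(P l) ≤ ∏ _l : κ, n.centralBinom ^ 2 :=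
              prod_le_prod' fun l _ => card_filter_sum_eq_sum_add_le n _
          _ = _ := by rw [prod_const, card_univ]

section Walks

variable {q t : ℕ} (X : Fin q → ℤ × ℤ)

theorem Ewalk_mono {f g : (Fin q → ℕ → ℤ × ℤ) → ℝ} (h : ∀ S, f S ≤ g S) :
    Ewalk q t X f ≤ Ewalk q t X g :=
  div_le_div_of_nonneg_right (sum_le_sum fun _ _ => h _) (by positivity)

theorem Ewalk_sum {α : Type*} (s : Finset α) (f : α → (Fin q → ℕ → ℤ × ℤ) → ℝ) :
    Ewalk q t X (fun S => ∑ a ∈ s, f a S) = ∑ a ∈ s, Ewalk q t X (f a) := by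
  simp only [Ewalk, ← sum_div]
  rw [sum_comm]

theorem Pwalk_mono {A B : (Fin q → ℕ → ℤ × ℤ) → Prop} (h : ∀ S, A S → B S) :
    Pwalk q t X A ≤ Pwalk q t X B :=
  Ewalk_mono X fun S => by split_ifs <;> simp_all

theorem Pwalk_exists_le_sum {α : Type*} (s : Finset α) (A : α → (Fin q → ℕ → ℤ × ℤ) → Prop) :
    Pwalk q t X (fun S => ∃ a ∈ s, A a S) ≤ ∑ a ∈ s, Pwalk q t X (A a) := by
  classical
  have hnonneg (a : α) (S) : (0 : ℝ) ≤ if A a S then 1 else 0 := by split_ifs <;> norm_num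
  refine (Ewalk_mono X fun S => ?_).trans (Ewalk_sum X s _).le
  split_ifs with h
  · obtain ⟨a, ha, hA⟩ := h
    exact (if_pos hA).symm.le.trans (single_le_sum (fun b _ => hnonneg b S) ha)
  · exact sum_nonneg fun b _ => hnonneg b S

open Classical in
theorem Pwalk_eq_card (A : (Fin q → ℕ → ℤ × ℤ) → Prop) :
    Pwalk q t X A =
      #{δ : Fin q → Fin t → steps | A fun i => walkPath (X i) fun k => (δ i k : ℤ × ℤ)} /
        4 ^ (q * t) := by
  rw [Pwalk, Ewalk, sum_boole]

end Walks

theorem walkPath_self {t : ℕ} (x : ℤ × ℤ) (δ : Fin t → ℤ × ℤ) :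
    walkPath x δ t = x + ∑ k, δ k := by
  rw [walkPath, filter_true_of_mem fun k _ => k.isLt]

theorem Pwalk_forall_collide_le {q k n : ℕ} (X : Fin q → ℤ × ℤ) (e : Fin k ⊕ Fin k ↪ Fin q) :
    Pwalk q n X (fun S => ∀ l, S (e (.inl l)) n = S (e (.inr l)) n) ≤
      ((3 * n + 1 : ℝ) ^ k)⁻¹ := by
  have h2k : 2 * k ≤ q := by simpa [two_mul] using Fintype.card_le_of_embedding e
  have hcount := card_filter_forall_collide_le X e n
  simp only [Fintype.card_fin] at hcount
  rw [Pwalk_eq_card, div_le_iff₀ (by positivity), ← div_eq_inv_mul,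
    le_div_iff₀ (by positivity)]
  simp only [walkPath_self]
  norm_cast
  -- `convert` only reconciles the decidability instances of the two filters
  convert Nat.le_trans (Nat.mul_le_mul_right _ hcount) (centralBinom_sq_pow_mul_le n h2k)

section Collisions

variable {ι α : Type*} [DecidableEq ι] [DecidableEq α] (pos : ι → α)

def collisions (T : Finset ι) : Finset ι := {i ∈ T | ∃ j ∈ T, j ≠ i ∧ pos i = pos j}

theorem card_collisions_le_card_collisions_sdiff_add_three {T : Finset ι} {i j : ι}
    (hi : i ∈ T) (hj : j ∈ T) (hij : pos i = pos j) :
    #(collisions pos T) ≤ #(collisions pos (T \ {i, j})) + 3 := by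
  set T' := T \ {i, j}
  have hstray (m : ι) (hm : m ∈ (collisions pos T \ collisions pos T') \ {i, j}) :
      m ∈ T' ∧ pos m = pos i ∧ m ∉ collisions pos T' := by
    simp only [Finset.mem_sdiff, mem_insert, mem_singleton, not_or] at hm
    obtain ⟨⟨hmcT, hmc⟩, hmi, hmj⟩ := hm
    obtain ⟨hmT, j', hj'T, hj'm, hmj'⟩ := mem_filter.mp hmcT
    have hmT' : m ∈ T' := by simp [T', hmT, hmi, hmj]
    refine ⟨hmT', ?_, hmc⟩
    by_cases hj' : j' ∈ T'
    · exact absurd (mem_filter.mpr ⟨hmT', j', hj', hj'm, hmj'⟩) hmc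
    · obtain rfl | rfl : j' = i ∨ j' = j := by simp [T', hj'T] at hj'; tauto
      exacts [hmj', hmj'.trans hij.symm]
  have hstrays : #((collisions pos T \ collisions pos T') \ {i, j}) ≤ 1 := by
    refine card_le_one.mpr fun a ha b hb => ?_
    by_contra hab
    obtain ⟨haT, hapos, hac⟩ := hstray a ha
    obtain ⟨hbT, hbpos, -⟩ := hstray b hb
    exact hac (mem_filter.mpr ⟨haT, b, hbT, Ne.symm hab, hapos.trans hbpos.symm⟩)
  calc #(collisions pos T)
      ≤ #(collisions pos T \ collisions pos T') + #(collisions pos T') :=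
        card_le_card_sdiff_add_card
    _ ≤ #((collisions pos T \ collisions pos T') \ {i, j}) + #{i, j} +
          #(collisions pos T') := by
        gcongr; exact card_le_card_sdiff_add_card
    _ ≤ #(collisions pos T') + 3 := by have := card_le_two (a := i) (b := j); omega

theorem exists_disjoint_collision_pairs (k : ℕ) (T : Finset ι)
    (hT : 3 * k ≤ #(collisions pos T) + 2) :
    ∃ f g : Fin k → ι, Injective (Sum.elim f g) ∧
      ∀ l, f l ∈ T ∧ g l ∈ T ∧ pos (f l) = pos (g l) := by
  induction k generalizing T with
  | zero => exact ⟨Fin.elim0, Fin.elim0, injective_of_subsingleton _, fun l => l.elim0⟩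
  | succ k ih =>
    obtain ⟨i, hi⟩ : (collisions pos T).Nonempty := card_pos.mp (by omega)
    obtain ⟨hiT, j, hjT, hji, hij⟩ := mem_filter.mp hi
    obtain ⟨f, g, hfg, hmem⟩ := ih (T \ {i, j})
      (by have := card_collisions_le_card_collisions_sdiff_add_three pos hiT hjT hij; omega)
    have hne {m : ι} (hm : m ∈ T \ {i, j}) : m ≠ i ∧ m ≠ j := by
      simpa using (mem_sdiff.mp hm).2
    rw [Sum.elim_injective] at hfg
    obtain ⟨hf, hg, hfg⟩ := hfg
    refine ⟨Fin.cons i f, Fin.cons j g, Sum.elim_injective.mpr ⟨?_, ?_, ?_⟩,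
      Fin.forall_fin_succ.mpr ⟨⟨hiT, hjT, hij⟩, fun l => ?_⟩⟩
    · exact Fin.cons_injective_iff.mpr ⟨fun ⟨l, hl⟩ => (hne (hmem l).1).1 hl, hf⟩
    · exact Fin.cons_injective_iff.mpr ⟨fun ⟨l, hl⟩ => (hne (hmem l).2.1).2 hl, hg⟩
    · simp only [Fin.forall_fin_succ, Fin.cons_zero, Fin.cons_succ]
      exact ⟨⟨hji.symm, fun l => (hne (hmem l).2.1).1.symm⟩,
        fun l => ⟨(hne (hmem l).1).2, hfg l⟩⟩
    · simp only [Fin.cons_succ]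
      exact ⟨(mem_sdiff.mp (hmem l).1).1, (mem_sdiff.mp (hmem l).2.1).1, (hmem l).2.2⟩

theorem exists_embedding_collision_pairs [Fintype ι] {k : ℕ}
    (h : 3 * k ≤ #{i | ∃ j, j ≠ i ∧ pos i = pos j} + 2) :
    ∃ e : Fin k ⊕ Fin k ↪ ι, ∀ l, pos (e (.inl l)) = pos (e (.inr l)) := by
  obtain ⟨f, g, hfg, hmem⟩ :=
    exists_disjoint_collision_pairs pos k univ (by simpa [collisions] using h)
  exact ⟨⟨Sum.elim f g, hfg⟩, fun l => (hmem l).2.2⟩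

end Collisions

theorem descFactorial_le_pow_of_le {q m p : ℕ} (hm : 0 < m) (hmp : m ≤ p) :
    q.descFactorial m ≤ q ^ p := by
  rcases q.eq_zero_or_pos with rfl | hq
  · simp [Nat.descFactorial_eq_zero_iff_lt.mpr hm]
  · exact (Nat.descFactorial_le_pow q m).trans (Nat.pow_le_pow_right hq hmp)

theorem inv_three_mul_add_one_pow_le_rpow {n k : ℕ} (hn : 1 ≤ n) {x : ℝ} (hx : x ≤ k) :
    ((3 * n + 1 : ℝ) ^ k)⁻¹ ≤ (n : ℝ) ^ (-x) := by
  have hn' : (1 : ℝ) ≤ n := by exact_mod_cast hn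
  calc ((3 * n + 1 : ℝ) ^ k)⁻¹ ≤ ((n : ℝ) ^ k)⁻¹ :=
        inv_anti₀ (by positivity) (pow_le_pow_left₀ (by positivity) (by linarith) k)
    _ = (n : ℝ) ^ (-(k : ℝ)) := by rw [Real.rpow_neg (by positivity), Real.rpow_natCast]
    _ ≤ (n : ℝ) ^ (-x) := Real.rpow_le_rpow_of_exponent_le hn' (by linarith)

theorem stmt11_general
    (p q : ℕ) (hp : 2 ≤ p) (n : ℕ) (hn : 1 ≤ n)
    (X : Fin q → ℤ × ℤ) :
    Pwalk q n X (fun S =>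
        ¬ ((Finset.univ.filter
            (fun i : Fin q => ∃ j : Fin q, j ≠ i ∧ S i n = S j n)).card ≤ p)) ≤
      (q : ℝ) ^ p * (n : ℝ) ^ (-(p : ℝ) / 3) := by
  set k := (p + 2) / 3 -- ⌈p / 3⌉
  calc _ ≤ Pwalk q n X (fun S => ∃ e ∈ (univ : Finset (Fin k ⊕ Fin k ↪ Fin q)),
        ∀ l, S (e (.inl l)) n = S (e (.inr l)) n) :=
        Pwalk_mono X fun S hS => by
          have hS : 3 * k ≤ #{i | ∃ j, j ≠ i ∧ S i n = S j n} + 2 := by omega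
          -- `convert` only reconciles the decidability instances of the two filters
          obtain ⟨e, he⟩ := exists_embedding_collision_pairs (S · n) (by convert hS)
          exact ⟨e, mem_univ e, he⟩
    _ ≤ ∑ _e : Fin k ⊕ Fin k ↪ Fin q, ((3 * n + 1 : ℝ) ^ k)⁻¹ :=
        (Pwalk_exists_le_sum X _ _).trans (sum_le_sum fun e _ => Pwalk_forall_collide_le X e)
    _ = q.descFactorial (2 * k) * ((3 * n + 1 : ℝ) ^ k)⁻¹ := by
        simp [Fintype.card_embedding_eq, two_mul]
    _ ≤ (q : ℝ) ^ p * (n : ℝ) ^ (-(p : ℝ) / 3) := by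
        gcongr
        · exact_mod_cast descFactorial_le_pow_of_le (by omega) (by omega)
        · rw [neg_div]
          refine inv_three_mul_add_one_pow_le_rpow hn ?_
          rw [div_le_iff₀ (by norm_num)]
          exact_mod_cast (by omega : p ≤ k * 3)

theorem stmt11
    (p q : ℕ) (hp : 2 ≤ p) (hq : 2 ≤ q) (n : ℕ) (hn : 1 ≤ n)
    (X : Fin q → ℤ × ℤ) :
    Pwalk q n X (fun S =>
        ¬ ((Finset.univ.filter
            (fun i : Fin q => ∃ j : Fin q, j ≠ i ∧ S i n = S j n)).card ≤ p)) ≤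
      (q : ℝ) ^ p * (n : ℝ) ^ (-(p : ℝ) / 3) :=
  stmt11_general p q hp n hn X

end DP
end
end

section
/- Let m ∈ ℕ and γ_0, γ_1, …, γ_{m−1} ∈ {0,1}. Define integers c_i^k for 0 ≤ k ≤ m and i ∈ ℤ by: c_0^0 := 1, c_i^k := 0 whenever i < 0 or i > k, and the recursion c_i^{k+1} := c_i^k + 2·γ_k·Σ_{j=0}^{i−1} c_j^k for 0 ≤ i ≤ k+1. Then for every δ > 0 and every 0 ≤ i ≤ m: c_i^m ≤ (1+δ)^i · (1 + 2/δ)^{Σ_{r=0}^{m−1} γ_r}. -/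
open MeasureTheory ProbabilityTheory Filter Finset

noncomputable section

namespace DP

/-!
Inductively, `c k i ≤ (1 + δ)^i A_k` with `A_k = (1 + 2/δ)^(γ_0 + ⋯ + γ_{k-1})`. In the step the
geometric sum gives `Σ_{j<i} (1 + δ)^j ≤ (1 + δ)^i / δ`, so `c (k+1) i ≤ (1 + δ)^i A_k (1 + 2γ_k/δ)`,
and Bernoulli's inequality `1 + 2γ_k/δ ≤ (1 + 2/δ)^γ_k` closes the induction.
-/

section

variable {δ : ℝ}

lemma geom_sum_one_add_le_pow_div (hδ : 0 < δ) (i : ℕ) :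
    ∑ j ∈ range i, (1 + δ) ^ j ≤ (1 + δ) ^ i / δ := by
  rw [geom_sum_eq (by linarith), add_sub_cancel_left]
  gcongr
  linarith

lemma add_two_mul_sum_le_of_le_pow_mul (hδ : 0 < δ) {A : ℝ} (hA : 0 ≤ A) {x : ℕ → ℝ} {i : ℕ}
    (hx : ∀ j ≤ i, x j ≤ (1 + δ) ^ j * A) (g : ℕ) :
    x i + 2 * g * ∑ j ∈ range i, x j ≤ (1 + δ) ^ i * (A * (1 + 2 / δ) ^ g) := by
  have hsum : ∑ j ∈ range i, x j ≤ (1 + δ) ^ i / δ * A :=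
    calc ∑ j ∈ range i, x j
        ≤ ∑ j ∈ range i, (1 + δ) ^ j * A :=
          sum_le_sum fun j hj => hx j (mem_range.mp hj).le
      _ = (∑ j ∈ range i, (1 + δ) ^ j) * A := (sum_mul ..).symm
      _ ≤ (1 + δ) ^ i / δ * A := by gcongr; exact geom_sum_one_add_le_pow_div hδ i
  have hbernoulli : 1 + g * (2 / δ) ≤ (1 + 2 / δ) ^ g :=
    one_add_mul_le_pow (by linarith [show 0 ≤ 2 / δ by positivity]) g
  calc x i + 2 * g * ∑ j ∈ range i, x j
      ≤ (1 + δ) ^ i * A + 2 * g * ((1 + δ) ^ i / δ * A) := by gcongr; exact hx i le_rfl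
      _ = (1 + δ) ^ i * A * (1 + g * (2 / δ)) := by field_simp
      _ ≤ (1 + δ) ^ i * A * (1 + 2 / δ) ^ g := by gcongr
      _ = (1 + δ) ^ i * (A * (1 + 2 / δ) ^ g) := by ring

end

theorem stmt14_general
    (m : ℕ) (γ : ℕ → ℕ)
    (c : ℕ → ℕ → ℝ)
    (hc00 : c 0 0 = 1)
    (hczero : ∀ k i : ℕ, k ≤ m → k < i → c k i = 0)
    (hrec : ∀ k : ℕ, k + 1 ≤ m → ∀ i : ℕ, i ≤ k + 1 →
      c (k + 1) i = c k i + 2 * (γ k : ℝ) * ∑ j ∈ Finset.range i, c k j)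
    (δ : ℝ) (hδ : 0 < δ) :
    ∀ i : ℕ, i ≤ m →
      c m i ≤ (1 + δ) ^ i * (1 + 2 / δ) ^ (∑ r ∈ Finset.range m, γ r) := by
  suffices h : ∀ k ≤ m, ∀ i, c k i ≤ (1 + δ) ^ i * (1 + 2 / δ) ^ (∑ r ∈ range k, γ r) from
    fun i _ => h m le_rfl i
  intro k hk i
  induction k generalizing i with
  | zero =>
    rcases Nat.eq_zero_or_pos i with rfl | hi
    · simp [hc00]
    · rw [hczero 0 i hk hi]; positivity
  | succ k ih =>
    rcases le_or_gt i (k + 1) with hi | hi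
    · rw [hrec k hk i hi, sum_range_succ, pow_add]
      exact add_two_mul_sum_le_of_le_pow_mul hδ (by positivity)
        (fun j _ => ih (by omega) j) (γ k)
    · rw [hczero (k + 1) i hk hi]; positivity

theorem stmt14
    (m : ℕ) (γ : ℕ → ℕ) (hγ : ∀ r, γ r = 0 ∨ γ r = 1)
    (c : ℕ → ℕ → ℝ)
    (hc00 : c 0 0 = 1)
    (hczero : ∀ k i : ℕ, k ≤ m → k < i → c k i = 0)
    (hrec : ∀ k : ℕ, k + 1 ≤ m → ∀ i : ℕ, i ≤ k + 1 →
      c (k + 1) i = c k i + 2 * (γ k : ℝ) * ∑ j ∈ Finset.range i, c k j)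
    (δ : ℝ) (hδ : 0 < δ) :
    ∀ i : ℕ, i ≤ m →
      c m i ≤ (1 + δ) ^ i * (1 + 2 / δ) ^ (∑ r ∈ Finset.range m, γ r) :=
  stmt14_general m γ c hc00 hczero hrec δ hδ

end DP
end
end

section
/- Let m ∈ ℕ and γ_0, γ_1, …, γ_m ∈ {0,1}. Define numbers a_l^k for 0 ≤ k ≤ m+1 and l ∈ ℤ by: a_0^0 := 1, a_l^k := 0 whenever l < 0 or l > k, and the recursion a_l^{k+1} := 2·γ_k·a_{l−1}^k + Σ_{j=l}^{k} a_j^k. Set n_k := Σ_{i=0}^{k−1} γ_i. Then: (i) a_l^k = 0 for every l > n_k; (ii) for every δ ∈ (0,1/2) and every 0 ≤ l ≤ n_k: a_l^k ≤ 2^{n_k} · (1+2δ)^k · δ^{−(n_k − l)}. -/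
open MeasureTheory ProbabilityTheory Filter Finset

noncomputable section

namespace DP

/-!
It suffices to prove `a k l ≤ 2 ^ n_k (1 + 2δ) ^ k δ ^ (l - n_k)` for every integer `l`, by
induction on `k`. The tail sum in the recursion is then dominated by a geometric series, costing a
factor `(1 - δ)⁻¹ ≤ 1 + 2δ`. When `γ_k = 1` the term `2 a_{l-1}^k` is one power of `δ` larger, and
`2 + δ (1 + 2δ) ≤ 2 (1 + 2δ)` is paid for by the extra factor `2` in `2 ^ n_{k+1}`.
-/

theorem sum_Icc_zpow_sub_le {δ : ℝ} (hδ₀ : 0 ≤ δ) (hδ₁ : δ < 1) (l K : ℤ) :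
    ∑ j ∈ Icc l K, δ ^ (j - l) ≤ (1 - δ)⁻¹ := by
  have reindex : ∑ j ∈ Icc l K, δ ^ (j - l) = ∑ i ∈ range (K + 1 - l).toNat, δ ^ i := by
    refine sum_nbij' (fun j => (j - l).toNat) (fun i => l + i) ?_ ?_ ?_ ?_ ?_ <;>
      intro x hx <;> simp only [mem_Icc, mem_range] at hx ⊢ <;> try omega
    rw [← zpow_natCast, Int.toNat_of_nonneg (by omega)]
  rw [reindex, range_eq_Ico]
  simpa using geom_sum_Ico_le_of_lt_one (m := 0) (n := (K + 1 - l).toNat) hδ₀ hδ₁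

theorem inv_one_sub_le_one_add_two_mul {δ : ℝ} (hδ₀ : 0 ≤ δ) (hδ : δ ≤ 1 / 2) :
    (1 - δ)⁻¹ ≤ 1 + 2 * δ := by
  rw [inv_le_iff_one_le_mul₀ (by linarith)]
  nlinarith

structure SolvesRecursion (m : ℕ) (γ : ℕ → ℕ) (a : ℕ → ℤ → ℝ) : Prop where
  eq_zero : ∀ (k : ℕ) (l : ℤ), k ≤ m + 1 → (l < 0 ∨ (k : ℤ) < l) → a k l = 0
  succ : ∀ k : ℕ, k + 1 ≤ m + 1 → ∀ l : ℤ, 0 ≤ l → l ≤ (k : ℤ) + 1 →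
    a (k + 1) l = 2 * (γ k : ℝ) * a k (l - 1) + ∑ j ∈ Icc l (k : ℤ), a k j

namespace SolvesRecursion

variable {m : ℕ} {γ : ℕ → ℕ} {a : ℕ → ℤ → ℝ}

theorem eq_zero_of_sum_lt (h : SolvesRecursion m γ a) {k : ℕ} (hk : k ≤ m + 1) {l : ℤ}
    (hl : ((∑ i ∈ range k, γ i : ℕ) : ℤ) < l) : a k l = 0 := by
  induction k generalizing l with
  | zero => exact h.eq_zero 0 l hk (Or.inr (by simpa using hl))
  | succ k ih =>
    rw [sum_range_succ, Nat.cast_add] at hl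
    rcases lt_or_ge ((k : ℤ) + 1) l with hlk | hlk
    · exact h.eq_zero _ _ hk (Or.inr (by push_cast; omega))
    have hsum : ∑ j ∈ Icc l (k : ℤ), a k j = 0 :=
      sum_eq_zero fun j hj => ih (by omega) (by rw [mem_Icc] at hj; omega)
    rw [h.succ k hk l (by omega) hlk, hsum, add_zero]
    rcases Nat.eq_zero_or_pos (γ k) with hγk | hγk
    · simp [hγk]
    · rw [ih (by omega) (by omega), mul_zero]

theorem le_two_pow_mul_zpow (h : SolvesRecursion m γ a) (h₀ : a 0 0 ≤ 1)
    (hγ : ∀ r, γ r = 0 ∨ γ r = 1) {δ : ℝ} (hδ₀ : 0 < δ) (hδ : δ ≤ 1 / 2) {k : ℕ}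
    (hk : k ≤ m + 1) (l : ℤ) :
    a k l ≤ 2 ^ (∑ i ∈ range k, γ i) * (1 + 2 * δ) ^ k *
      δ ^ (l - ((∑ i ∈ range k, γ i : ℕ) : ℤ)) := by
  induction k generalizing l with
  | zero =>
    rcases lt_trichotomy l 0 with hl | rfl | hl
    · rw [h.eq_zero 0 l hk (Or.inl hl)]; positivity
    · simpa using h₀
    · rw [h.eq_zero 0 l hk (Or.inr hl)]; positivity
  | succ k ih =>
    set n := ∑ i ∈ range k, γ i
    set B : ℝ := 2 ^ n * (1 + 2 * δ) ^ k with hB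
    by_cases hl : 0 ≤ l ∧ l ≤ (k : ℤ) + 1
    swap
    · rw [h.eq_zero _ l hk (by omega)]; positivity
    have hsum : ∑ j ∈ Icc l (k : ℤ), a k j ≤ B * (1 + 2 * δ) * δ ^ (l - n) :=
      calc ∑ j ∈ Icc l (k : ℤ), a k j
          ≤ ∑ j ∈ Icc l (k : ℤ), B * δ ^ (l - n) * δ ^ (j - l) :=
            sum_le_sum fun j _ => by
              rw [mul_assoc, ← zpow_add₀ hδ₀.ne', sub_add_sub_cancel']
              exact ih (by omega) j
        _ ≤ B * δ ^ (l - n) * (1 + 2 * δ) := by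
            rw [← mul_sum]
            gcongr
            exact (sum_Icc_zpow_sub_le hδ₀.le (by linarith) l k).trans
              (inv_one_sub_le_one_add_two_mul hδ₀.le hδ)
        _ = B * (1 + 2 * δ) * δ ^ (l - n) := by ring
    rw [h.succ k hk l hl.1 hl.2, sum_range_succ]
    rcases hγ k with hγk | hγk <;> rw [hγk]
    · rw [Nat.cast_zero, mul_zero, zero_mul, zero_add, add_zero]
      exact hsum.trans_eq (by rw [hB]; ring)
    · have hprev : a k (l - 1) ≤ B * δ ^ (l - 1 - n) := ih (by omega) (l - 1)
      have hshift : δ ^ (l - n) = δ ^ (l - 1 - n) * δ := by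
        rw [← zpow_add_one₀ hδ₀.ne']; ring_nf
      calc 2 * ((1 : ℕ) : ℝ) * a k (l - 1) + ∑ j ∈ Icc l (k : ℤ), a k j
          ≤ 2 * (B * δ ^ (l - 1 - n)) + B * (1 + 2 * δ) * δ ^ (l - n) := by
            push_cast; linarith
        _ = B * δ ^ (l - 1 - n) * (2 + δ * (1 + 2 * δ)) := by rw [hshift]; ring
        _ ≤ B * δ ^ (l - 1 - n) * (2 * (1 + 2 * δ)) := by gcongr; nlinarith
        _ = 2 ^ (n + 1) * (1 + 2 * δ) ^ (k + 1) * δ ^ (l - ((n + 1 : ℕ) : ℤ)) := by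
            rw [hB, Nat.cast_succ, show l - (n + 1) = l - 1 - n by ring]; ring

end SolvesRecursion

theorem stmt15
    (m : ℕ) (γ : ℕ → ℕ) (hγ : ∀ r, γ r = 0 ∨ γ r = 1)
    (a : ℕ → ℤ → ℝ)
    (ha00 : a 0 0 = 1)
    (hazero : ∀ (k : ℕ) (l : ℤ), k ≤ m + 1 → (l < 0 ∨ (k : ℤ) < l) → a k l = 0)
    (harec : ∀ k : ℕ, k + 1 ≤ m + 1 → ∀ l : ℤ, 0 ≤ l → l ≤ (k : ℤ) + 1 →
      a (k + 1) l = 2 * (γ k : ℝ) * a k (l - 1) + ∑ j ∈ Finset.Icc l (k : ℤ), a k j) :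
    (∀ k : ℕ, k ≤ m + 1 → ∀ l : ℤ, ((∑ i ∈ Finset.range k, γ i : ℕ) : ℤ) < l →
      a k l = 0) ∧
    (∀ δ : ℝ, 0 < δ → δ < 1 / 2 → ∀ k : ℕ, k ≤ m + 1 → ∀ l : ℤ, 0 ≤ l →
      l ≤ ((∑ i ∈ Finset.range k, γ i : ℕ) : ℤ) →
      a k l ≤ 2 ^ (∑ i ∈ Finset.range k, γ i) * (1 + 2 * δ) ^ k *
        δ ^ (-(((∑ i ∈ Finset.range k, γ i : ℕ) : ℤ) - l))) := by
  have h : SolvesRecursion m γ a := ⟨hazero, harec⟩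
  refine ⟨fun k hk l hl => h.eq_zero_of_sum_lt hk hl, fun δ hδ₀ hδ k hk l _ _ => ?_⟩
  rw [neg_sub]
  exact h.le_two_pow_mul_zpow ha00.le hγ hδ₀ hδ.le hk l

end DP
end
end

section
/- Assume the sub-critical regime (SC) or the quasi-critical regime (QC). There exists ε = ε(μ) ∈ (0,1) such that for all N and all integers q ≥ 2 with q² ≤ ε·log N: Σ over subsets K ⊆ C_q with |K| ≥ 2 of σ_N^{2|K| − 1{A_K}} ≤ 8·q³·σ_N³, where C_q := {(i,j) : 1 ≤ i < j ≤ q}, and A_K is the property that there exist two distinct pairs (i,j), (k,l) ∈ K with {i,j} ∩ {k,l} ≠ ∅. -/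
open MeasureTheory ProbabilityTheory Filter Finset

noncomputable section

/-!
Split the sum according to whether `K` contains two pairs sharing an index. Such a `K` is
determined by an ordered overlapping pair in it (at most `4q³` choices) together with the rest
of `K`, so these terms contribute at most `4q³σ³(1 + σ²)^|C_q|`; the remaining terms are bounded
in the same way by `q⁴σ⁴(1 + σ²)^|C_q|`. Both are `O(q³σ³)` once `q²σ² ≤ 1/4`, which follows
from `q² ≤ ε log N` because `σ_N² = O(1 / log N)` in both regimes. In the quasi-critical regime
this is the definition together with `R_N ≥ log N / 4`; in the sub-critical one
`σ² = e^{Λ₂(β)} - 1 ≤ E[e^{2βω}] - 1 = O(β²)` since `Λ ≥ 0`. Finally `R_N ≥ log N / 4` because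
`p_{2n}(0) ≥ (binom(2n, n) / 4ⁿ)² ≥ 1 / (4n)`: the coordinates `x + y` and `x - y` of the walk
are two independent simple random walks on `ℤ`.
-/

namespace DP

open Real

lemma exp_sub_one_sub_le_sq_mul_exp_abs (u : ℝ) : exp u - 1 - u ≤ u ^ 2 * exp |u| := by
  rcases le_or_gt |u| 1 with hu | hu
  · have h := (abs_le.mp (abs_exp_sub_one_sub_id_le hu)).2
    nlinarith [one_le_exp (abs_nonneg u), sq_nonneg u]
  · have hsq : 1 ≤ u ^ 2 := by nlinarith [sq_abs u, abs_nonneg u]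
    rcases le_or_gt 0 u with h0 | h0
    · rw [abs_of_nonneg h0]
      nlinarith [exp_pos u]
    · rw [abs_of_neg h0] at hu ⊢
      nlinarith [exp_pos (-u), exp_le_one_iff.mpr h0.le, add_one_le_exp (-u)]

lemma sq_mul_exp_abs_le (x : ℝ) : x ^ 2 * exp |x| ≤ 2 * (exp (2 * x) + exp (-2 * x)) := by
  have hsq : x ^ 2 ≤ 2 * exp |x| := by
    have := Real.pow_div_factorial_le_exp |x| (abs_nonneg x) 2
    rw [sq_abs] at this
    norm_num at this
    linarith
  have habs : exp |x| * exp |x| ≤ exp (2 * x) + exp (-2 * x) := by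
    rw [← exp_add]
    rcases abs_cases x with ⟨h, _⟩ | ⟨h, _⟩ <;> rw [h]
    · rw [← two_mul]
      linarith [exp_pos (-2 * x)]
    · rw [show -x + -x = -2 * x by ring]
      linarith [exp_pos (2 * x)]
  nlinarith [exp_pos |x|]

lemma abs_le_exp_add_exp_neg (x : ℝ) : |x| ≤ exp x + exp (-x) := by
  rcases abs_cases x with ⟨h, _⟩ | ⟨h, _⟩ <;> rw [h] <;>
    linarith [add_one_le_exp x, add_one_le_exp (-x), exp_pos x, exp_pos (-x)]

namespace EnvLaw

variable {μ : Measure ℝ}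

lemma integrable_id (hμ : EnvLaw μ) : Integrable (fun x : ℝ => x) μ := by
  refine ((hμ.exp_moments 1).add (hμ.exp_moments (-1))).mono' aestronglyMeasurable_id ?_
  filter_upwards with x
  simpa using abs_le_exp_add_exp_neg x

lemma integral_one_add_mul (hμ : EnvLaw μ) (β : ℝ) : ∫ x, (1 + β * x) ∂μ = 1 := by
  have := hμ.prob
  rw [integral_add (integrable_const 1) (hμ.integrable_id.const_mul β), integral_const_mul,
    hμ.mean_zero]
  simp

lemma one_le_integral_exp (hμ : EnvLaw μ) (β : ℝ) : 1 ≤ ∫ x, exp (β * x) ∂μ := by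
  have := hμ.prob
  rw [← hμ.integral_one_add_mul β]
  exact integral_mono ((integrable_const 1).add (hμ.integrable_id.const_mul β))
    (hμ.exp_moments β) fun x => by linarith [add_one_le_exp (β * x)]

lemma cgf_nonneg (hμ : EnvLaw μ) (β : ℝ) : 0 ≤ cgf μ β :=
  log_nonneg (hμ.one_le_integral_exp β)

lemma sigma2_le (hμ : EnvLaw μ) {β : ℝ} (hβ : |2 * β| ≤ 1) :
    sigma2 μ β ≤ 8 * β ^ 2 * ∫ x, (exp (2 * x) + exp (-2 * x)) ∂μ := by
  have := hμ.prob
  have hM : Integrable (fun x => exp (2 * x) + exp (-2 * x)) μ :=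
    (hμ.exp_moments 2).add (by simpa [neg_mul] using hμ.exp_moments (-2))
  have hlin : Integrable (fun x : ℝ => 1 + 2 * β * x) μ :=
    (integrable_const 1).add (hμ.integrable_id.const_mul (2 * β))
  have hpoint (x : ℝ) :
      exp (2 * β * x) ≤ 1 + 2 * β * x + 8 * β ^ 2 * (exp (2 * x) + exp (-2 * x)) := by
    have h1 := exp_sub_one_sub_le_sq_mul_exp_abs (2 * β * x)
    have h2 : exp |2 * β * x| ≤ exp |x| := by
      rw [exp_le_exp, abs_mul]
      exact mul_le_of_le_one_left (abs_nonneg x) hβ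
    have h3 := sq_mul_exp_abs_le x
    have h4 : (2 * β * x) ^ 2 * exp |2 * β * x| ≤ 4 * β ^ 2 * (x ^ 2 * exp |x|) := by
      rw [show (2 * β * x) ^ 2 = 4 * β ^ 2 * x ^ 2 by ring, mul_assoc]
      gcongr
    nlinarith [sq_nonneg β]
  have hexp : ∫ x, exp (2 * β * x) ∂μ ≤ 1 + 8 * β ^ 2 * ∫ x, (exp (2 * x) + exp (-2 * x)) ∂μ := by
    calc ∫ x, exp (2 * β * x) ∂μ
        ≤ ∫ x, (1 + 2 * β * x + 8 * β ^ 2 * (exp (2 * x) + exp (-2 * x))) ∂μ :=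
          integral_mono (hμ.exp_moments _) (hlin.add (hM.const_mul _)) hpoint
      _ = _ := by
          rw [integral_add hlin (hM.const_mul _), integral_const_mul, hμ.integral_one_add_mul]
  calc sigma2 μ β = exp (cgf μ (2 * β) - 2 * cgf μ β) - 1 := by
        simp [sigma2, cgfp]
    _ ≤ exp (cgf μ (2 * β)) - 1 := by
        gcongr
        linarith [hμ.cgf_nonneg β]
    _ = ∫ x, exp (2 * β * x) ∂μ - 1 := by
        rw [cgf, exp_log (by linarith [hμ.one_le_integral_exp (2 * β)])]
    _ ≤ _ := by linarith

end EnvLaw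

open Classical in
lemma pSRW_eq_card (n : ℕ) (x : ℤ × ℤ) :
    pSRW n x = (#{η : Fin n → steps | ∑ k, (η k : ℤ × ℤ) = x} : ℝ) / 4 ^ n := by
  have hpath (η : Fin n → ℤ × ℤ) : walkPath 0 η n = ∑ k, η k := by
    simp [walkPath]
  rw [pSRW, Pwalk, Ewalk, one_mul, Finset.card_filter]
  congr 1
  push_cast
  exact Fintype.sum_equiv (Equiv.funUnique (Fin 1) _) _ _ fun δ => by simp [hpath]

lemma sum_ite_mem_one_neg_one {m : ℕ} (A : Finset (Fin m)) :
    ∑ k, (if k ∈ A then (1 : ℤ) else -1) = 2 * #A - m := by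
  calc ∑ k, (if k ∈ A then (1 : ℤ) else -1) = ∑ k, (2 * (if k ∈ A then 1 else 0) - 1) :=
        Finset.sum_congr rfl fun k _ => by split_ifs <;> norm_num
    _ = 2 * #A - m := by simp [Finset.sum_sub_distrib, mul_comm]

/-- A step of `ℤ²` with diagonal coordinates `x + y = ±1` and `x - y = ±1` given by `a` and `b`. -/
def diagStep : Bool → Bool → ℤ × ℤ
  | true, true => (1, 0)
  | true, false => (0, 1)
  | false, true => (0, -1)
  | false, false => (-1, 0)

lemma diagStep_mem_steps (a b : Bool) : diagStep a b ∈ steps := by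
  cases a <;> cases b <;> decide

lemma diagStep_fst_add_snd (a b : Bool) :
    (diagStep a b).1 + (diagStep a b).2 = if a then 1 else -1 := by
  cases a <;> cases b <;> rfl

lemma diagStep_fst_sub_snd (a b : Bool) :
    (diagStep a b).1 - (diagStep a b).2 = if b then 1 else -1 := by
  cases a <;> cases b <;> rfl

def diagPath {m : ℕ} (A B : Finset (Fin m)) (k : Fin m) : steps :=
  ⟨diagStep (k ∈ A) (k ∈ B), diagStep_mem_steps _ _⟩

lemma sum_diagPath_eq_zero {n : ℕ} {A B : Finset (Fin (2 * n))} (hA : #A = n) (hB : #B = n) :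
    ∑ k, (diagPath A B k : ℤ × ℤ) = 0 := by
  have hadd : ∑ k, ((diagPath A B k : ℤ × ℤ).1 + (diagPath A B k : ℤ × ℤ).2) = 0 := by
    simp [diagPath, diagStep_fst_add_snd, sum_ite_mem_one_neg_one, hA]
  have hsub : ∑ k, ((diagPath A B k : ℤ × ℤ).1 - (diagPath A B k : ℤ × ℤ).2) = 0 := by
    simp [diagPath, diagStep_fst_sub_snd, sum_ite_mem_one_neg_one, hB]
  rw [Finset.sum_add_distrib] at hadd
  rw [Finset.sum_sub_distrib] at hsub
  ext <;> simp only [Prod.fst_sum, Prod.snd_sum, Prod.fst_zero, Prod.snd_zero] <;> omega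

lemma eq_of_diagPath_eq {m : ℕ} {A B A' B' : Finset (Fin m)}
    (h : diagPath A B = diagPath A' B') : A = A' ∧ B = B' := by
  constructor <;> ext k <;> have hk := congrArg (fun η => (η k : ℤ × ℤ)) h
  · have := congrArg (fun z : ℤ × ℤ => z.1 + z.2) hk
    simp only [diagPath, diagStep_fst_add_snd] at this
    split_ifs at this <;> simp_all
  · have := congrArg (fun z : ℤ × ℤ => z.1 - z.2) hk
    simp only [diagPath, diagStep_fst_sub_snd] at this
    split_ifs at this <;> simp_all

lemma centralBinom_sq_le_card (n : ℕ) :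
    n.centralBinom ^ 2 ≤ #{η : Fin (2 * n) → steps | ∑ k, (η k : ℤ × ℤ) = 0} := by
  let P := powersetCard n (univ : Finset (Fin (2 * n)))
  have hcard : #(P ×ˢ P) = n.centralBinom ^ 2 := by
    simp [P, Nat.centralBinom_eq_two_mul_choose, sq]
  rw [← hcard]
  refine Finset.card_le_card_of_injOn (fun AB => diagPath AB.1 AB.2) ?_ ?_
  · intro AB hAB
    simp only [P, Finset.coe_product, Set.mem_prod, Finset.mem_coe,
      Finset.mem_powersetCard_univ] at hAB
    simpa using sum_diagPath_eq_zero hAB.1 hAB.2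
  · intro AB _ AB' _ h
    obtain ⟨h1, h2⟩ := eq_of_diagPath_eq h
    exact Prod.ext h1 h2

lemma sixteen_pow_le_mul_centralBinom_sq {n : ℕ} (hn : 1 ≤ n) :
    16 ^ n ≤ 4 * n * n.centralBinom ^ 2 := by
  induction n, hn using Nat.le_induction with
  | base => decide
  | succ k hk ih =>
    have hrec := Nat.succ_mul_centralBinom_succ k
    refine Nat.le_of_mul_le_mul_left ?_ (by positivity : 0 < (k + 1) ^ 2)
    calc (k + 1) ^ 2 * 16 ^ (k + 1) = 16 * (k + 1) ^ 2 * 16 ^ k := by ring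
      _ ≤ 16 * (k + 1) ^ 2 * (4 * k * k.centralBinom ^ 2) := by gcongr
      _ ≤ 16 * (k + 1) * (2 * k + 1) ^ 2 * k.centralBinom ^ 2 := by
        have : (k + 1) * (4 * k) ≤ (2 * k + 1) ^ 2 := by nlinarith
        calc 16 * (k + 1) ^ 2 * (4 * k * k.centralBinom ^ 2)
            = 16 * (k + 1) * ((k + 1) * (4 * k)) * k.centralBinom ^ 2 := by ring
          _ ≤ _ := by gcongr
      _ = (k + 1) ^ 2 * (4 * (k + 1) * (k + 1).centralBinom ^ 2) := by
        rw [show (k + 1) ^ 2 * (4 * (k + 1) * (k + 1).centralBinom ^ 2)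
          = 4 * (k + 1) * ((k + 1) * (k + 1).centralBinom) ^ 2 by ring, hrec]
        ring

lemma one_div_four_mul_le_pSRW {n : ℕ} (hn : 1 ≤ n) : 1 / (4 * n : ℝ) ≤ pSRW (2 * n) 0 := by
  have hbinom : (16 : ℝ) ^ n ≤ 4 * n * n.centralBinom ^ 2 := by
    exact_mod_cast sixteen_pow_le_mul_centralBinom_sq hn
  have hcount : (n.centralBinom ^ 2 : ℝ) ≤ #{η : Fin (2 * n) → steps | ∑ k, (η k : ℤ × ℤ) = 0} :=
    mod_cast centralBinom_sq_le_card n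
  rw [pSRW_eq_card, pow_mul, div_le_div_iff₀ (by positivity) (by positivity)]
  calc 1 * ((4 : ℝ) ^ 2) ^ n = 16 ^ n := by norm_num
    _ ≤ n.centralBinom ^ 2 * (4 * n) := by linarith
    _ ≤ _ := by gcongr

lemma log_le_four_mul_RN (N : ℕ) : log N ≤ 4 * RN N := by
  calc log N ≤ log (N + 1 : ℕ) := by
        rcases N.eq_zero_or_pos with rfl | hN
        · simp
        · exact log_le_log (by positivity) (by norm_num)
    _ ≤ ∑ n ∈ Icc 1 N, (n : ℝ)⁻¹ := by
        simpa [harmonic_eq_sum_Icc] using log_add_one_le_harmonic N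
    _ ≤ 4 * RN N := by
        rw [RN, Finset.mul_sum]
        refine Finset.sum_le_sum fun n hn => ?_
        have := one_div_four_mul_le_pSRW (Finset.mem_Icc.mp hn).1
        rw [one_div, mul_inv] at this
        linarith

lemma one_div_RN_le {N : ℕ} (hN : 0 < log N) : 1 / RN N ≤ 4 / log N := by
  have := log_le_four_mul_RN N
  rw [div_le_div_iff₀ (by linarith) hN]
  linarith

lemma SC.eventually_sigma2_le {μ : Measure ℝ} (hμ : EnvLaw μ) {βN : ℕ → ℝ} {bhat : ℝ}
    (hsc : SC βN bhat) :
    ∃ C, ∀ᶠ N : ℕ in atTop, sigma2 μ (βN N) ≤ C / log N := by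
  obtain ⟨hb0, hb1, hβ⟩ := hsc
  set M := ∫ x, (exp (2 * x) + exp (-2 * x)) ∂μ
  have hM : 0 ≤ M := integral_nonneg fun x => by positivity
  refine ⟨32 * M, ?_⟩
  filter_upwards [(tendsto_log_atTop.comp tendsto_natCast_atTop_atTop).eventually_ge_atTop 16]
    with N (hN : 16 ≤ log N)
  have hR := one_div_RN_le (N := N) (by linarith)
  have hRpos : 0 < RN N := by linarith [log_le_four_mul_RN N]
  have hβ2 : βN N ^ 2 ≤ 4 / log N := by
    rw [hβ N, div_pow, sq_sqrt hRpos.le]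
    calc bhat ^ 2 / RN N ≤ 1 / RN N := by gcongr; nlinarith
      _ ≤ 4 / log N := hR
  have h2β : |2 * βN N| ≤ 1 := by
    rw [← sq_le_one_iff_abs_le_one, mul_pow]
    have : 4 / log N ≤ 1 / 4 := by rw [div_le_div_iff₀ (by linarith) (by norm_num)]; linarith
    linarith
  calc sigma2 μ (βN N) ≤ 8 * βN N ^ 2 * M := hμ.sigma2_le h2β
    _ ≤ 8 * (4 / log N) * M := by gcongr
    _ = 32 * M / log N := by ring

lemma QC.eventually_sigma2_le {μ : Measure ℝ} {βN : ℕ → ℝ} {ϑ : ℕ → ℝ} (hqc : QC μ βN ϑ) :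
    ∀ᶠ N : ℕ in atTop, sigma2 μ (βN N) ≤ 4 / log N := by
  filter_upwards [hqc.theta_top.eventually_ge_atTop 0, eventually_ge_atTop 2] with N hϑ hN
  have hlog : 0 < log N := log_pos (by exact_mod_cast hN)
  have hRpos : 0 < RN N := by linarith [log_le_four_mul_RN N]
  have hR := one_div_RN_le hlog
  rw [hqc.sigma_eq N hN]
  calc 1 / RN N * (1 - ϑ N / log N) ≤ 1 / RN N * 1 := by
        gcongr
        linarith [div_nonneg hϑ hlog.le]
    _ ≤ 4 / log N := by linarith

lemma eventually_sigma2_le {μ : Measure ℝ} (hμ : EnvLaw μ) {βN : ℕ → ℝ} {bhat : ℝ}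
    {ϑ : ℕ → ℝ} (hreg : SC βN bhat ∨ QC μ βN ϑ) :
    ∃ C, ∀ᶠ N : ℕ in atTop, sigma2 μ (βN N) ≤ C / log N :=
  hreg.elim (SC.eventually_sigma2_le hμ) fun hqc => ⟨4, hqc.eventually_sigma2_le⟩

lemma exists_forall_le_div_log {f : ℕ → ℝ} {C : ℝ} (hf : ∀ᶠ N : ℕ in atTop, f N ≤ C / log N)
    {a : ℝ} (ha : 0 < a) :
    ∃ C', 1 ≤ C' ∧ ∀ N : ℕ, a * C' ≤ log N → f N ≤ C' / log N := by
  obtain ⟨N₀, hN₀⟩ := eventually_atTop.mp hf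
  refine ⟨max (max C 1) ((log N₀ + 1) / a), (le_max_right _ _).trans (le_max_left _ _),
    fun N hN => ?_⟩
  have hlog : log N₀ + 1 ≤ log N :=
    le_trans (by rw [← div_le_iff₀' ha]; exact le_max_right _ _) hN
  have hlogpos : 0 < log N := by linarith [log_natCast_nonneg N₀]
  have hN : N₀ ≤ N := by
    by_contra! h
    have hNpos : 0 < N := Nat.pos_of_ne_zero (by rintro rfl; simp at hlogpos)
    linarith [log_le_log (by exact_mod_cast hNpos) (by exact_mod_cast h.le : (N : ℝ) ≤ N₀)]
  calc f N ≤ C / log N := hN₀ N hN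
    _ ≤ max (max C 1) ((log N₀ + 1) / a) / log N := by
        gcongr
        exact (le_max_left _ _).trans (le_max_left _ _)

lemma sum_pow_card_sub_two_le {β : Type*} [DecidableEq β] {C : Finset β}
    {S : Finset (Finset β)} (W : Finset (β × β))
    (hS : ∀ K ∈ S, K ⊆ C ∧ ∃ w ∈ W, w.1 ∈ K ∧ w.2 ∈ K ∧ w.1 ≠ w.2) {x : ℝ} (hx : 0 ≤ x) :
    ∑ K ∈ S, x ^ (#K - 2) ≤ #W * (1 + x) ^ #C := by
  rcases S.eq_empty_or_nonempty with rfl | ⟨K₀, hK₀⟩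
  · simp only [Finset.sum_empty]
    positivity
  have : Nonempty (β × β) := ⟨(hS K₀ hK₀).2.choose⟩
  choose! w hwW hw1 hw2 hne using fun K hK => (hS K hK).2
  have hsub (K) (hK : K ∈ S) : {(w K).1, (w K).2} ⊆ K := by
    simp [Finset.insert_subset_iff, hw1 K hK, hw2 K hK]
  set φ : Finset β → (β × β) × Finset β := fun K => (w K, K \ {(w K).1, (w K).2})
  have hφ : Set.InjOn φ S := fun K hK K' hK' h => by
    simp only [φ, Prod.mk.injEq] at h
    calc K = K \ {(w K).1, (w K).2} ∪ {(w K).1, (w K).2} := (sdiff_union_of_subset (hsub K hK)).symm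
      _ = K' \ {(w K').1, (w K').2} ∪ {(w K').1, (w K').2} := by rw [h.2, h.1]
      _ = K' := sdiff_union_of_subset (hsub K' hK')
  calc ∑ K ∈ S, x ^ (#K - 2) = ∑ K ∈ S, x ^ #(φ K).2 := by
        refine Finset.sum_congr rfl fun K hK => ?_
        rw [card_sdiff_of_subset (hsub K hK), card_pair (hne K hK)]
    _ = ∑ z ∈ S.image φ, x ^ #z.2 := (Finset.sum_image (f := fun z => x ^ #z.2) hφ).symm
    _ ≤ ∑ z ∈ W ×ˢ C.powerset, x ^ #z.2 := by
        refine Finset.sum_le_sum_of_subset_of_nonneg ?_ fun _ _ _ => by positivity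
        simp only [Finset.subset_iff, Finset.mem_image, Finset.mem_product, Finset.mem_powerset]
        rintro _ ⟨K, hK, rfl⟩
        exact ⟨hwW K hK, sdiff_subset.trans (hS K hK).1⟩
    _ = #W * (1 + x) ^ #C := by
        have hbinom := Finset.sum_pow_mul_eq_add_pow x 1 C
        simp only [one_pow, mul_one, add_comm x] at hbinom
        simp only [Finset.sum_product, hbinom, Finset.sum_const, nsmul_eq_mul]

def overlappingPairs (α : Type*) [Fintype α] [DecidableEq α] : Finset ((α × α) × (α × α)) :=
  {z | ({z.1.1, z.1.2} ∩ {z.2.1, z.2.2} : Finset α).Nonempty}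

lemma card_overlappingPairs_le (α : Type*) [Fintype α] [DecidableEq α] :
    #(overlappingPairs α) ≤ 4 * Fintype.card α ^ 3 := by
  -- An overlapping second pair is given by the shared entry (`b₁`), its slot (`b₂`) and one more.
  let g : (α × α) × α × Bool × Bool → (α × α) × (α × α) := fun ⟨p, c, b₁, b₂⟩ =>
    let s := if b₁ then p.1 else p.2
    (p, if b₂ then (s, c) else (c, s))
  calc #(overlappingPairs α) ≤ #(univ.image g) := by
        refine Finset.card_le_card fun z hz => ?_
        obtain ⟨y, hy⟩ := (Finset.mem_filter.mp hz).2
        simp only [Finset.mem_inter, Finset.mem_insert, Finset.mem_singleton] at hy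
        simp only [Finset.mem_image, Finset.mem_univ, true_and, Prod.exists, g]
        obtain ⟨⟨a, b⟩, ⟨c, d⟩⟩ := z
        rcases hy with ⟨rfl | rfl, rfl | rfl⟩
        exacts [⟨y, b, d, true, true, rfl⟩, ⟨y, b, c, true, false, rfl⟩,
          ⟨a, y, d, false, true, rfl⟩, ⟨a, y, c, false, false, rfl⟩]
    _ ≤ 4 * Fintype.card α ^ 3 := by
        refine Finset.card_image_le.trans (le_of_eq ?_)
        simp [Fintype.card_prod]
        ring

lemma one_add_pow_le_four_thirds {m : ℕ} {x : ℝ} (hx : 0 ≤ x) (hmx : m * x ≤ 1 / 4) :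
    (1 + x) ^ m ≤ 4 / 3 := by
  calc (1 + x) ^ m ≤ exp x ^ m := by
        gcongr
        linarith [add_one_le_exp x]
    _ = exp (m * x) := (exp_nat_mul x m).symm
    _ ≤ exp (1 / 4) := exp_le_exp.mpr hmx
    _ ≤ 1 / (1 - 1 / 4) := exp_bound_div_one_sub_of_interval (by norm_num) (by norm_num)
    _ = 4 / 3 := by norm_num

lemma pow_two_mul_sub_eq (t : ℝ) {k e : ℕ} (hk : 2 ≤ k) (he : e ≤ 4) :
    t ^ (2 * k - e) = t ^ (4 - e) * (t ^ 2) ^ (k - 2) := by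
  rw [← pow_mul, ← pow_add]
  congr 1
  omega

lemma sum_pow_two_mul_card_sub_le {β : Type*} [DecidableEq β] {C : Finset β}
    {S : Finset (Finset β)} (W : Finset (β × β))
    (hS : ∀ K ∈ S, K ⊆ C ∧ ∃ w ∈ W, w.1 ∈ K ∧ w.2 ∈ K ∧ w.1 ≠ w.2) {e : ℕ} (he : e ≤ 4)
    {t : ℝ} (ht : 0 ≤ t) :
    ∑ K ∈ S, t ^ (2 * #K - e) ≤ t ^ (4 - e) * (#W * (1 + t ^ 2) ^ #C) := by
  have hcard (K) (hK : K ∈ S) : 2 ≤ #K := by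
    obtain ⟨-, w, -, hw1, hw2, hne⟩ := hS K hK
    exact Finset.one_lt_card.mpr ⟨w.1, hw1, w.2, hw2, hne⟩
  rw [Finset.sum_congr rfl fun K hK => pow_two_mul_sub_eq t (hcard K hK) he, ← Finset.mul_sum]
  gcongr
  exact sum_pow_card_sub_two_le W hS (sq_nonneg t)

theorem sum_pow_two_mul_card_sub_ite_le {α : Type*} [Fintype α] [DecidableEq α]
    (C : Finset (α × α)) (A : Finset (α × α) → Prop) [DecidablePred A]
    (hA : ∀ K, A K → ∃ p ∈ K, ∃ p' ∈ K, p ≠ p' ∧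
      ({p.1, p.2} ∩ {p'.1, p'.2} : Finset α).Nonempty)
    {t : ℝ} (ht : 0 ≤ t) (hnt : (Fintype.card α : ℝ) ^ 2 * t ^ 2 ≤ 1 / 4) :
    ∑ K ∈ C.powerset.filter (fun K => 2 ≤ #K), t ^ (2 * #K - if A K then 1 else 0)
      ≤ 8 * (Fintype.card α : ℝ) ^ 3 * t ^ 3 := by
  set n : ℝ := (Fintype.card α : ℝ) with hn
  set S := C.powerset.filter (fun K => 2 ≤ #K)
  have hS (K) (hK : K ∈ S) : K ⊆ C ∧ 2 ≤ #K := by simpa [S] using hK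
  have hbase : (1 + t ^ 2) ^ #C ≤ 4 / 3 := by
    refine one_add_pow_le_four_thirds (by positivity) (le_trans ?_ hnt)
    have hC : #C ≤ Fintype.card α ^ 2 := (Finset.card_le_univ C).trans_eq (by simp [sq])
    have : (#C : ℝ) ≤ n ^ 2 := by rw [hn]; exact_mod_cast hC
    gcongr
  have hW : (#(overlappingPairs α) : ℝ) ≤ 4 * n ^ 3 := by
    rw [hn]; exact_mod_cast card_overlappingPairs_le α
  have hU : (#(univ : Finset ((α × α) × (α × α))) : ℝ) = n ^ 4 := by
    simp [hn, Fintype.card_prod]; ring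
  have hsumA : ∑ K ∈ S.filter A, t ^ (2 * #K - if A K then 1 else 0)
      ≤ t ^ 3 * (#(overlappingPairs α) * (1 + t ^ 2) ^ #C) := by
    rw [Finset.sum_congr rfl fun K hK => by rw [if_pos (Finset.mem_filter.mp hK).2]]
    refine sum_pow_two_mul_card_sub_le _ (fun K hK => ?_) (by norm_num) ht
    obtain ⟨hKS, hAK⟩ := Finset.mem_filter.mp hK
    obtain ⟨p, hp, p', hp', hne, hint⟩ := hA K hAK
    exact ⟨(hS K hKS).1, (p, p'), by simpa [overlappingPairs] using hint, hp, hp', hne⟩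
  have hsumB : ∑ K ∈ S.filter (fun K => ¬ A K), t ^ (2 * #K - if A K then 1 else 0)
      ≤ t ^ 4 * (#(univ : Finset ((α × α) × (α × α))) * (1 + t ^ 2) ^ #C) := by
    rw [Finset.sum_congr rfl fun K hK => by rw [if_neg (Finset.mem_filter.mp hK).2]]
    refine sum_pow_two_mul_card_sub_le _ (fun K hK => ?_) (by norm_num) ht
    obtain ⟨hKS, -⟩ := Finset.mem_filter.mp hK
    obtain ⟨p, hp, p', hp', hne⟩ := Finset.one_lt_card.mp (hS K hKS).2
    exact ⟨(hS K hKS).1, (p, p'), Finset.mem_univ _, hp, hp', hne⟩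
  have hnt' : n * t ≤ 1 / 2 := by nlinarith [mul_nonneg (Nat.cast_nonneg _ : (0 : ℝ) ≤ n) ht]
  rw [← Finset.sum_filter_add_sum_filter_not S A]
  calc _ ≤ t ^ 3 * (4 * n ^ 3 * (4 / 3)) + t ^ 4 * (n ^ 4 * (4 / 3)) := by
        refine add_le_add (hsumA.trans ?_) (hsumB.trans ?_)
        · gcongr
        · rw [hU]; gcongr
    _ = (16 / 3 + 4 / 3 * (n * t)) * (n ^ 3 * t ^ 3) := by ring
    _ ≤ 8 * (n ^ 3 * t ^ 3) := by gcongr; linarith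
    _ = 8 * n ^ 3 * t ^ 3 := by ring

open Classical in
theorem stmt16
    (μ : Measure ℝ) (hμ : EnvLaw μ)
    (βN : ℕ → ℝ) (bhat : ℝ) (ϑ : ℕ → ℝ)
    (hreg : SC βN bhat ∨ QC μ βN ϑ) :
    ∃ ε : ℝ, 0 < ε ∧ ε < 1 ∧ ∀ N q : ℕ, 2 ≤ q → (q : ℝ) ^ 2 ≤ ε * Real.log N →
      ∑ K ∈ (Cq q).powerset.filter (fun K => 2 ≤ K.card),
        Real.sqrt (sigma2 μ (βN N)) ^
          (2 * K.card - (if ∃ p ∈ K, ∃ p' ∈ K, p ≠ p' ∧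
              (({p.1, p.2} ∩ {p'.1, p'.2} : Finset (Fin q))).Nonempty then 1 else 0)) ≤
        8 * (q : ℝ) ^ 3 * Real.sqrt (sigma2 μ (βN N)) ^ 3 := by
  obtain ⟨C₀, hC₀⟩ := eventually_sigma2_le hμ hreg
  obtain ⟨C, hC1, hσ⟩ := exists_forall_le_div_log hC₀ (a := 16) (by norm_num)
  refine ⟨1 / (4 * C), by positivity, by rw [div_lt_one (by positivity)]; linarith,
    fun N q hq hqN => ?_⟩
  have hq4 : (4 : ℝ) ≤ q ^ 2 := by
    have : (2 : ℝ) ≤ q := by exact_mod_cast hq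
    nlinarith
  have hlog : 16 * C ≤ log N := by
    rw [div_mul_eq_mul_div, one_mul, le_div_iff₀ (by positivity)] at hqN
    nlinarith
  have hlogpos : 0 < log N := by linarith
  have hσq : (q : ℝ) ^ 2 * sqrt (sigma2 μ (βN N)) ^ 2 ≤ 1 / 4 := by
    rw [sq_sqrt']
    calc (q : ℝ) ^ 2 * max (sigma2 μ (βN N)) 0 ≤ 1 / (4 * C) * log N * (C / log N) :=
          mul_le_mul hqN (max_le (hσ N hlog) (by positivity)) (le_max_right _ _) (by positivity)
      _ = 1 / 4 := by field_simp [hlogpos.ne']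
  simpa using sum_pow_two_mul_card_sub_ite_le (Cq q) _ (fun K h => h) (sqrt_nonneg _)
    (by simpa using hσq)

end DP
end
end
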